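/- arXiv:2204.01084 — 6 statements merged into one kernel-verified Lean document; each statement's English description precedes it below -/
import Mathlib

section
/- Suppose the 0-1 matrix w (with r rows and m columns) satisfies the SSSI constraint, i.e., every column of w contains at most one nonzero entry. Then the block matrix M(w) = [[N, 0], [0, −w], [N_U, −I_m]] is totally unimodular. -/
/-- A matrix is totally unimodular if every square submatrix has determinant `0`, `1`, or `-1`. -/
def IsTU {α β : Type*} (A : Matrix α β ℤ) : Prop :=
  ∀ (k : ℕ) (f : Fin k → α) (g : Fin k → β),
    Function.Injective f → Function.Injective g →
      (A.submatrix f g).det = 0 ∨ (A.submatrix f g).det = 1 ∨ (A.submatrix f g).det = -1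

/-- The incidence matrix `N` of the bipartite graph `B(A,B)`: rows indexed by
`Fin n ⊕ (V ⊕ Fin m)` (left vertices `X_L` and right vertices `X_R ∪ U`), columns by edges. -/
def Nmat {n m : ℕ} {V E : Type*} [DecidableEq V] (ℓ : E → Fin n) (ρ : E → V ⊕ Fin m) :
    Matrix (Fin n ⊕ (V ⊕ Fin m)) E ℤ := fun v e =>
  match v with
  | Sum.inl i => if ℓ e = i then 1 else 0
  | Sum.inr u => if ρ e = u then 1 else 0

/-- The matrix `N_U` selecting the input-vertex rows of the incidence matrix. -/
def NUmat {m : ℕ} {V E : Type*} [DecidableEq V] (ρ : E → V ⊕ Fin m) :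
    Matrix (Fin m) E ℤ := fun j e => if ρ e = Sum.inr j then 1 else 0

/-- The block matrix `M(w) = [[N, 0], [0, -w], [N_U, -I_m]]`. -/
def Mmat {n m r : ℕ} {V E : Type*} [DecidableEq V] (ℓ : E → Fin n) (ρ : E → V ⊕ Fin m)
    (w : Matrix (Fin r) (Fin m) ℤ) :
    Matrix (((Fin n ⊕ (V ⊕ Fin m)) ⊕ Fin r) ⊕ Fin m) (E ⊕ Fin m) ℤ :=
  Matrix.fromBlocks (Matrix.fromRows (Nmat ℓ ρ) 0) (Matrix.fromRows 0 (-w))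
    (NUmat ρ) (-(1 : Matrix (Fin m) (Fin m) ℤ))

/-! Give the rows of `M(w)` (left vertices, right vertices, rows of `w`, rows of `U`) the signs
`+1, -1, +1, -1`. In a square submatrix that does not contain both the row of an input vertex `j`
in `N` and the row `j` of `[N_U, -I_m]`, every signed column then has at most one entry `+1` and at
most one entry `-1`: either some column has a single nonzero entry and we expand along it, or the
signed rows sum to zero. If the submatrix contains both rows, they differ by the unit vector
`-e_j`, so one row operation and a Laplace expansion reduce it to a smaller submatrix. -/

theorem SignType.mem_range_cast_iff {α : Type*} [Zero α] [One α] [Neg α] {x : α} :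
    x ∈ Set.range SignType.cast ↔ x = 0 ∨ x = 1 ∨ x = -1 := by
  rw [SignType.range_eq]
  simp [or_comm]

theorem SignType.mul_mem_range_cast {α : Type*} [MulZeroOneClass α] [HasDistribNeg α] {a b : α}
    (ha : a ∈ Set.range SignType.cast) (hb : b ∈ Set.range SignType.cast) :
    a * b ∈ Set.range SignType.cast := by
  obtain ⟨s, rfl⟩ := ha
  obtain ⟨t, rfl⟩ := hb
  exact ⟨s * t, SignType.coe_mul s t⟩

theorem isTU_iff_isTotallyUnimodular {α β : Type*} (A : Matrix α β ℤ) :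
    IsTU A ↔ A.IsTotallyUnimodular := by
  simp only [IsTU, Matrix.IsTotallyUnimodular, SignType.mem_range_cast_iff]

theorem Int.sum_eq_zero_of_unique_signs {ι : Type*} [Fintype ι] {x : ι → ℤ}
    (hx : ∀ i, x i = 0 ∨ x i = 1 ∨ x i = -1)
    (hinj : ∀ i i', x i ≠ 0 → x i = x i' → i = i') {i₁ i₂ : ι} (hne : i₁ ≠ i₂)
    (h₁ : x i₁ ≠ 0) (h₂ : x i₂ ≠ 0) : ∑ i, x i = 0 := by
  have h₁₂ : x i₁ ≠ x i₂ := fun h => hne (hinj _ _ h₁ h)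
  rw [Fintype.sum_eq_add i₁ i₂ hne fun i ⟨hi₁, hi₂⟩ => ?_]
  · have := hx i₁; have := hx i₂; omega
  · by_contra hi
    have : x i = x i₁ ∨ x i = x i₂ := by
      have := hx i; have := hx i₁; have := hx i₂; omega
    rcases this with h | h
    · exact hi₁ (hinj _ _ hi h)
    · exact hi₂ (hinj _ _ hi h)

namespace Matrix

variable {R : Type*} [CommRing R] {k : ℕ}

theorem det_succ_column_of_eq_zero (A : Matrix (Fin (k + 1)) (Fin (k + 1)) R)
    {i j : Fin (k + 1)} (h : ∀ i' ≠ i, A i' j = 0) :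
    A.det = (-1) ^ (i + j : ℕ) * A i j * (A.submatrix i.succAbove j.succAbove).det := by
  rw [det_succ_column A j,
    Fintype.sum_eq_single i fun i' hi' => by rw [h i' hi', mul_zero, zero_mul]]

theorem det_succ_row_of_eq_zero (A : Matrix (Fin (k + 1)) (Fin (k + 1)) R)
    {i j : Fin (k + 1)} (h : ∀ j' ≠ j, A i j' = 0) :
    A.det = (-1) ^ (i + j : ℕ) * A i j * (A.submatrix i.succAbove j.succAbove).det := by
  rw [det_succ_row A i,
    Fintype.sum_eq_single j fun j' hj' => by rw [h j' hj', mul_zero, zero_mul]]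

theorem det_succ_of_row_eq_add_single (A : Matrix (Fin (k + 1)) (Fin (k + 1)) R)
    {i i' j : Fin (k + 1)} (hi : i ≠ i') (c : R) (h : A i' = A i + Pi.single j c) :
    A.det = (-1) ^ (i' + j : ℕ) * c * (A.submatrix i'.succAbove j.succAbove).det := by
  have hrow : A i' + (-1 : R) • A i = Pi.single j c := by rw [h]; module
  rw [← det_updateRow_add_smul_self A hi.symm (-1), hrow,
    det_succ_row_of_eq_zero _ (i := i') (j := j) fun j' hj' => by simp [hj']]
  simp only [updateRow_self, Pi.single_eq_same]
  congr 2
  ext a b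
  simp

theorem isTotallyUnimodular_of_signing {α β : Type*} (A : Matrix α β ℤ) (σ : α → ℤˣ)
    (hA : ∀ a b, A a b = 0 ∨ A a b = 1 ∨ A a b = -1)
    (hcol : ∀ b a a', σ a * A a b ≠ 0 → σ a * A a b = σ a' * A a' b → a = a') :
    A.IsTotallyUnimodular := by
  intro k
  induction k with
  | zero => intro f g _ _; exact ⟨1, by simp⟩
  | succ k ih =>
    intro f g hf hg
    by_cases hsparse : ∃ i j, ∀ i' ≠ i, A (f i') (g j) = 0
    · obtain ⟨i, j, hij⟩ := hsparse
      rw [det_succ_column_of_eq_zero _ hij, submatrix_submatrix]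
      refine SignType.mul_mem_range_cast
        (SignType.mul_mem_range_cast ⟨(-1) ^ (i + j : ℕ), by simp⟩
          (SignType.mem_range_cast_iff.2 (hA _ _))) ?_
      exact ih _ _ (hf.comp Fin.succAbove_right_injective) (hg.comp Fin.succAbove_right_injective)
    · push Not at hsparse
      refine ⟨0, ?_⟩
      rw [SignType.coe_zero, eq_comm, ← exists_vecMul_eq_zero_iff]
      refine ⟨fun i => σ (f i), fun h => by simpa using congrFun h 0, funext fun j => ?_⟩
      obtain ⟨i₁, -, h₁⟩ := hsparse 0 j
      obtain ⟨i₂, h₂₁, h₂⟩ := hsparse i₁ j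
      refine Int.sum_eq_zero_of_unique_signs (fun i => ?_)
        (fun i i' hi h => hf (hcol (g j) _ _ hi h)) h₂₁.symm
        (by simpa using h₁) (by simpa using h₂)
      rcases Int.units_eq_one_or (σ (f i)) with h | h <;>
        rcases hA (f i) (g j) with h' | h' | h' <;> simp [h, h']

end Matrix

namespace Mmat

variable {n m r : ℕ} {V E : Type*} [DecidableEq V] {ℓ : E → Fin n} {ρ : E → V ⊕ Fin m}
  {w : Matrix (Fin r) (Fin m) ℤ}

abbrev Row (n m r : ℕ) (V : Type*) := ((Fin n ⊕ (V ⊕ Fin m)) ⊕ Fin r) ⊕ Fin m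

/-- The row of the input vertex `j` inside `N`; row `.inr j` of `M(w)` repeats it on the edge
columns. -/
def inputRow (j : Fin m) : Row n m r V := .inl (.inl (.inr (.inr j)))

def rowSign : Row n m r V → ℤˣ :=
  Sum.elim (Sum.elim (Sum.elim (fun _ => 1) (fun _ => -1)) (fun _ => 1)) (fun _ => -1)

theorem apply_eq_zero_or (h01 : ∀ i j, w i j = 0 ∨ w i j = 1) (x : Row n m r V)
    (b : E ⊕ Fin m) :
    Mmat ℓ ρ w x b = 0 ∨ Mmat ℓ ρ w x b = 1 ∨ Mmat ℓ ρ w x b = -1 := by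
  rcases x with ((i | u) | i) | j <;> rcases b with e | j' <;>
    simp [Mmat, Nmat, NUmat, Matrix.one_apply] <;> grind

theorem apply_inr [DecidableEq E] (j : Fin m) :
    Mmat ℓ ρ w (.inr j) = Mmat ℓ ρ w (inputRow j) + Pi.single (.inr j) (-1) := by
  ext (e | j') <;>
    simp [Mmat, Nmat, NUmat, inputRow, Matrix.one_apply, Pi.single_apply, eq_comm]
  split_ifs <;> simp

theorem rowSign_mul_apply_inj (h01 : ∀ i j, w i j = 0 ∨ w i j = 1)
    (hSSSI : ∀ j : Fin m, ∀ i i' : Fin r, w i j ≠ 0 → w i' j ≠ 0 → i = i')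
    {x x' : Row n m r V} {b : E ⊕ Fin m}
    (hx : (rowSign x : ℤ) * Mmat ℓ ρ w x b ≠ 0)
    (h : (rowSign x : ℤ) * Mmat ℓ ρ w x b = rowSign x' * Mmat ℓ ρ w x' b) :
    x = x' ∨ ∃ j, (x = inputRow j ∧ x' = .inr j) ∨ (x = .inr j ∧ x' = inputRow j) := by
  rcases x with ((i | u) | i) | j <;> rcases x' with ((i' | u') | i') | j' <;>
    rcases b with e | k <;>
    simp [Mmat, Nmat, NUmat, Matrix.one_apply, rowSign, inputRow] at hx h ⊢ <;> grind

theorem isTotallyUnimodular (h01 : ∀ i j, w i j = 0 ∨ w i j = 1)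
    (hSSSI : ∀ j : Fin m, ∀ i i' : Fin r, w i j ≠ 0 → w i' j ≠ 0 → i = i') :
    (Mmat ℓ ρ w).IsTotallyUnimodular := by
  classical
  intro k
  induction k with
  | zero => intro f g _ _; exact ⟨1, by simp⟩
  | succ k ih =>
    intro f g hf hg
    by_cases hpair : ∃ j pR pU, f pR = inputRow j ∧ f pU = .inr j
    · obtain ⟨j, pR, pU, hR, hU⟩ := hpair
      have hne : pR ≠ pU := by rintro rfl; rw [hR] at hU; cases hU
      by_cases hq : ∃ q, g q = .inr j
      · obtain ⟨q, hq⟩ := hq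
        have hrow : (Mmat ℓ ρ w).submatrix f g pU =
            (Mmat ℓ ρ w).submatrix f g pR + Pi.single q (-1) := by
          ext q'
          simp [hU, hR, apply_inr, Pi.single_apply, ← hq, hg.eq_iff]
        rw [Matrix.det_succ_of_row_eq_add_single _ hne (-1) hrow, Matrix.submatrix_submatrix]
        exact SignType.mul_mem_range_cast ⟨(-1) ^ (pU + q : ℕ) * -1, by simp⟩
          (ih _ _ (hf.comp Fin.succAbove_right_injective) (hg.comp Fin.succAbove_right_injective))
      · push Not at hq
        refine ⟨0, (Matrix.det_zero_of_row_eq hne (funext fun q' => ?_)).symm⟩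
        simp [hU, hR, apply_inr, hq]
    · push Not at hpair
      refine Matrix.isTotallyUnimodular_of_signing ((Mmat ℓ ρ w).submatrix f id) (rowSign ∘ f)
        (fun _ _ => apply_eq_zero_or h01 _ _) (fun b p p' hp h => ?_) (k + 1) id g
        Function.injective_id hg
      rcases rowSign_mul_apply_inj h01 hSSSI hp h with h | ⟨j, ⟨h, h'⟩ | ⟨h, h'⟩⟩
      · exact hf h
      · exact absurd h' (hpair j p p' h)
      · exact absurd h (hpair j p' p h')

end Mmat

theorem Mmat_isTU_of_SSSI_general {n m r : ℕ} {V E : Type*} [DecidableEq V]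
    (ℓ : E → Fin n) (ρ : E → V ⊕ Fin m)
    (w : Matrix (Fin r) (Fin m) ℤ)
    (h01 : ∀ i j, w i j = 0 ∨ w i j = 1)
    (hSSSI : ∀ j : Fin m, ∀ i i' : Fin r, w i j ≠ 0 → w i' j ≠ 0 → i = i') :
    IsTU (Mmat ℓ ρ w) :=
  (isTU_iff_isTotallyUnimodular _).2 (Mmat.isTotallyUnimodular h01 hSSSI)

/-- If the 0-1 matrix `w` satisfies the SSSI constraint (every column of `w` contains at most
one nonzero entry), then `M(w)` is totally unimodular. -/
theorem Mmat_isTU_of_SSSI {n m r : ℕ} {V E : Type*} [Fintype V] [Fintype E] [DecidableEq V]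
    (ℓ : E → Fin n) (ρ : E → V ⊕ Fin m)
    (hinj : Function.Injective fun e : E => (ℓ e, ρ e))
    (w : Matrix (Fin r) (Fin m) ℤ)
    (h01 : ∀ i j, w i j = 0 ∨ w i j = 1)
    (hSSSI : ∀ j : Fin m, ∀ i i' : Fin r, w i j ≠ 0 → w i' j ≠ 0 → i = i') :
    IsTU (Mmat ℓ ρ w) :=
  Mmat_isTU_of_SSSI_general ℓ ρ w h01 hSSSI
end

section
/- Suppose the 0-1 matrix w (with r rows and m columns) satisfies the SSSI constraint, i.e., every column of w contains at most one nonzero entry. Then the matrix M̂(w), obtained from M(w) = [[N, 0], [0, −w], [N_U, −I_m]] by appending one extra row equal to 0 on the E-indexed columns and 1 on the Fin m-indexed columns, is totally unimodular. -/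
/-- The matrix `M̂(w)`: `M(w)` with one extra row appended, equal to `0` on the `E`-indexed
columns and `1` on the `Fin m`-indexed columns. -/
def Mhat {n m r : ℕ} {V E : Type*} [DecidableEq V] (ℓ : E → Fin n) (ρ : E → V ⊕ Fin m)
    (w : Matrix (Fin r) (Fin m) ℤ) :
    Matrix ((((Fin n ⊕ (V ⊕ Fin m)) ⊕ Fin r) ⊕ Fin m) ⊕ Unit) (E ⊕ Fin m) ℤ :=
  Matrix.fromRows (Mmat ℓ ρ w)
    (Matrix.of fun (_ : Unit) j => Sum.elim (fun _ => (0 : ℤ)) (fun _ => (1 : ℤ)) j)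



lemma rowvec_eq_zero {k : ℕ} (B : Matrix (Fin k) (Fin k) ℤ) (hd : B.det ≠ 0)
    (v : Fin k → ℤ) (hv : ∀ c, ∑ j, v j * B j c = 0) : ∀ i, v i = 0 := by
  intro i
  have h1 : ∑ c, (∑ j, v j * B j c) * B.adjugate c i = 0 := by
    simp [hv]
  have h2 : ∑ c, (∑ j, v j * B j c) * B.adjugate c i
      = ∑ j, v j * (B * B.adjugate) j i := by
    simp_rw [Matrix.mul_apply, Finset.sum_mul, Finset.mul_sum, mul_assoc]
    exact Finset.sum_comm
  rw [h2, Matrix.mul_adjugate] at h1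
  simp [Matrix.smul_apply, Matrix.one_apply, Finset.sum_ite_eq] at h1
  rcases h1 with h | h
  · exact h
  · exact absurd h hd

lemma GH_to_TU {α β : Type*} (A : Matrix α β ℤ)
    (hGH : ∀ (k : ℕ) (f : Fin k → α), Function.Injective f → ∀ S : Finset (Fin k),
      ∃ z : Fin k → ℤ, (∀ j ∈ S, z j = 1 ∨ z j = -1) ∧
        ∀ c : β, (∑ a ∈ S, z a * A (f a) c) = 0 ∨ (∑ a ∈ S, z a * A (f a) c) = 1 ∨
          (∑ a ∈ S, z a * A (f a) c) = -1) :
    IsTU A := by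
  intro k
  induction k with
  | zero =>
    intro f g _ _
    right; left
    simp [Matrix.det_fin_zero]
  | succ k ih =>
    intro f g hf hg
    set B := A.submatrix f g with hB
    by_cases hd : B.det = 0
    · left; exact hd
    right
    -- x = row 0 of adjugate of B
    set x : Fin (k + 1) → ℤ := fun j => B.adjugate 0 j with hx
    have hx01 : ∀ j, x j = 0 ∨ x j = 1 ∨ x j = -1 := by
      intro j
      have hadj := Matrix.adjugate_fin_succ_eq_det_submatrix B 0 j
      have hdet := ih (f ∘ j.succAbove) (g ∘ (0 : Fin (k + 1)).succAbove)
        (hf.comp (Fin.succAbove_right_injective))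
        (hg.comp (Fin.succAbove_right_injective))
      rw [hB, Matrix.submatrix_submatrix] at hadj
      show B.adjugate 0 j = 0 ∨ B.adjugate 0 j = 1 ∨ B.adjugate 0 j = -1
      rw [hB, hadj]
      rcases neg_one_pow_eq_or ℤ ((j : ℕ) + (0 : Fin (k+1)) : ℕ) with h | h <;>
        rcases hdet with h' | h' | h' <;> rw [h, h'] <;> simp
    -- Cramer: ∑ j, x j * B j c = if 0 = c then det else 0
    have hAM : ∀ c, (∑ j, x j * B j c) = if (0 : Fin (k+1)) = c then B.det else 0 := by
      intro c
      have h := Matrix.adjugate_mul B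
      have h2 : (B.adjugate * B) 0 c = (B.det • (1 : Matrix (Fin (k+1)) (Fin (k+1)) ℤ)) 0 c := by
        rw [h]
      simpa [Matrix.mul_apply, Matrix.one_apply, mul_ite, hx] using h2
    set S : Finset (Fin (k + 1)) := Finset.univ.filter (fun j => x j ≠ 0) with hS
    -- S is nonempty
    have hS0 : ∃ j₀, j₀ ∈ S ∧ x j₀ ≠ 0 := by
      by_contra hc
      push_neg at hc
      have hzero : ∀ j, x j = 0 := by
        intro j
        by_cases hxj : x j = 0
        · exact hxj
        · exact hc j (Finset.mem_filter.mpr ⟨Finset.mem_univ j, hxj⟩)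
      have h := hAM 0
      rw [if_pos rfl] at h
      apply hd
      rw [← h]
      simp [hzero]
    obtain ⟨j₀, hj₀S, hxj₀⟩ := hS0
    obtain ⟨z, hz1, hzc⟩ := hGH (k + 1) f hf S
    -- y c := signed sum over S of rows of B at column c
    set y : Fin (k + 1) → ℤ := fun c => ∑ a ∈ S, z a * B a c with hy
    have hy01 : ∀ c, y c = 0 ∨ y c = 1 ∨ y c = -1 := fun c => hzc (g c)
    -- restricted Cramer sum
    have hxS : ∀ c, (∑ a ∈ S, x a * B a c) = if (0 : Fin (k+1)) = c then B.det else 0 := by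
      intro c
      rw [← hAM c]
      apply Finset.sum_subset (Finset.subset_univ S)
      intro j _ hjS
      have : x j = 0 := by
        by_contra hxj
        exact hjS (by simp [hS, hxj])
      simp [this]
    -- parity: for c ≠ 0, y c = 0
    have hpar : ∀ c, (0 : Fin (k+1)) ≠ c → y c = 0 := by
      intro c hc
      have hmod : ((y c : ZMod 2)) = ((∑ a ∈ S, x a * B a c : ℤ) : ZMod 2) := by
        simp only [hy]
        push_cast
        apply Finset.sum_congr rfl
        intro a ha
        have h1 : ((z a : ZMod 2)) = 1 := by
          rcases hz1 a ha with h | h <;> (rw [h]; decide)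
        have hxa : x a ≠ 0 := by
          have := (Finset.mem_filter.mp (hS ▸ ha)).2
          simpa using this
        have h2 : ((x a : ZMod 2)) = 1 := by
          rcases hx01 a with h | h | h
          · exact absurd h hxa
          · rw [h]; decide
          · rw [h]; decide
        rw [h1, h2]
      rw [hxS c, if_neg hc] at hmod
      push_cast at hmod
      rcases hy01 c with h | h | h
      · exact h
      · rw [h] at hmod; exact absurd hmod (by decide)
      · rw [h] at hmod; exact absurd hmod (by decide)
    -- z' : extension of z by 0
    set z' : Fin (k + 1) → ℤ := fun j => if j ∈ S then z j else 0 with hz'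
    have hz'B : ∀ c, (∑ j, z' j * B j c) = y c := by
      intro c
      rw [hy]
      rw [← Finset.sum_subset (Finset.subset_univ S) (fun j _ hjS => by simp [hz', hjS])]
      apply Finset.sum_congr rfl
      intro a ha
      simp [hz', ha]
    have hy0 : y 0 = 1 ∨ y 0 = -1 := by
      rcases hy01 0 with h | h | h
      · exfalso
        have hall : ∀ c, (∑ j, z' j * B j c) = 0 := by
          intro c
          rw [hz'B c]
          by_cases hc : (0 : Fin (k+1)) = c
          · rw [← hc, h]
          · exact hpar c hc
        have hcz : z j₀ = 0 := by
          simpa [hz', hj₀S] using rowvec_eq_zero B hd z' hall j₀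
        rcases hz1 j₀ hj₀S with h' | h' <;> omega
      · left; exact h
      · right; exact h
    -- v := y 0 • x - det • z' is in the left kernel
    set v : Fin (k + 1) → ℤ := fun j => y 0 * x j - B.det * z' j with hv
    have hvB : ∀ c, (∑ j, v j * B j c) = 0 := by
      intro c
      have : (∑ j, v j * B j c)
          = y 0 * (∑ j, x j * B j c) - B.det * (∑ j, z' j * B j c) := by
        rw [Finset.mul_sum, Finset.mul_sum, ← Finset.sum_sub_distrib]
        apply Finset.sum_congr rfl
        intro j _
        rw [hv]; ring
      rw [this, hAM c, hz'B c]
      by_cases hc : (0 : Fin (k+1)) = c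
      · rw [if_pos hc, ← hc]; ring
      · rw [if_neg hc, hpar c hc]; ring
    have hv0 : y 0 * x j₀ - B.det * z j₀ = 0 := by
      simpa [hv, hz', hj₀S] using rowvec_eq_zero B hd v hvB j₀
    rcases hy0 with h1 | h1 <;> rcases hz1 j₀ hj₀S with h2 | h2 <;>
      rcases hx01 j₀ with h3 | h3 | h3 <;>
        first
          | (exact absurd h3 hxj₀)
          | (rw [h1, h2, h3] at hv0; omega)


section GH
variable {n m r : ℕ} {V E : Type*} [DecidableEq V] (ℓ : E → Fin n) (ρ : E → V ⊕ Fin m)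
  (w : Matrix (Fin r) (Fin m) ℤ)

lemma MhatLE (i : Fin n) (e : E) :
    Mhat ℓ ρ w (Sum.inl (Sum.inl (Sum.inl (Sum.inl i)))) (Sum.inl e)
      = if ℓ e = i then 1 else 0 := rfl
lemma MhatRvE (v : V) (e : E) :
    Mhat ℓ ρ w (Sum.inl (Sum.inl (Sum.inl (Sum.inr (Sum.inl v))))) (Sum.inl e)
      = if ρ e = Sum.inl v then 1 else 0 := rfl
lemma MhatRjE (j : Fin m) (e : E) :
    Mhat ℓ ρ w (Sum.inl (Sum.inl (Sum.inl (Sum.inr (Sum.inr j))))) (Sum.inl e)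
      = if ρ e = Sum.inr j then 1 else 0 := rfl
lemma MhatWE (i : Fin r) (e : E) :
    Mhat ℓ ρ w (Sum.inl (Sum.inl (Sum.inr i))) (Sum.inl e) = 0 := rfl
lemma MhatIE (j : Fin m) (e : E) :
    Mhat ℓ ρ w (Sum.inl (Sum.inr j)) (Sum.inl e) = if ρ e = Sum.inr j then 1 else 0 := rfl
lemma MhatUE (u : Unit) (e : E) : Mhat ℓ ρ w (Sum.inr u) (Sum.inl e) = 0 := rfl
lemma MhatLm (i : Fin n) (j : Fin m) :
    Mhat ℓ ρ w (Sum.inl (Sum.inl (Sum.inl (Sum.inl i)))) (Sum.inr j) = 0 := rfl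
lemma MhatRvm (v : V) (j : Fin m) :
    Mhat ℓ ρ w (Sum.inl (Sum.inl (Sum.inl (Sum.inr (Sum.inl v))))) (Sum.inr j) = 0 := rfl
lemma MhatRjm (j' j : Fin m) :
    Mhat ℓ ρ w (Sum.inl (Sum.inl (Sum.inl (Sum.inr (Sum.inr j'))))) (Sum.inr j) = 0 := rfl
lemma MhatWm (i : Fin r) (j : Fin m) :
    Mhat ℓ ρ w (Sum.inl (Sum.inl (Sum.inr i))) (Sum.inr j) = -(w i j) := rfl
lemma MhatIm (j' j : Fin m) :
    Mhat ℓ ρ w (Sum.inl (Sum.inr j')) (Sum.inr j) = -(if j' = j then 1 else 0) := by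
  show -(1 : Matrix (Fin m) (Fin m) ℤ) j' j = _
  simp [Matrix.one_apply]
lemma MhatUm (u : Unit) (j : Fin m) : Mhat ℓ ρ w (Sum.inr u) (Sum.inr j) = 1 := rfl

lemma GH_Mhat [Fintype V] [Fintype E]
    (h01 : ∀ i j, w i j = 0 ∨ w i j = 1)
    (hSSSI : ∀ j : Fin m, ∀ i i' : Fin r, w i j ≠ 0 → w i' j ≠ 0 → i = i')
    (k : ℕ) (f : Fin k → ((((Fin n ⊕ (V ⊕ Fin m)) ⊕ Fin r) ⊕ Fin m) ⊕ Unit))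
    (hf : Function.Injective f) (S : Finset (Fin k)) :
    ∃ z : Fin k → ℤ, (∀ j ∈ S, z j = 1 ∨ z j = -1) ∧
      ∀ c, (∑ a ∈ S, z a * Mhat ℓ ρ w (f a) c) = 0 ∨
        (∑ a ∈ S, z a * Mhat ℓ ρ w (f a) c) = 1 ∨
        (∑ a ∈ S, z a * Mhat ℓ ρ w (f a) c) = -1 := by
  classical
  set U : Finset ((((Fin n ⊕ (V ⊕ Fin m)) ⊕ Fin r) ⊕ Fin m) ⊕ Unit) := S.image f with hU
  set ε : ((((Fin n ⊕ (V ⊕ Fin m)) ⊕ Fin r) ⊕ Fin m) ⊕ Unit) → ℤ :=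
    Sum.elim
      (Sum.elim
        (Sum.elim
          (Sum.elim (fun _ => (-1 : ℤ))
            (Sum.elim (fun _ => (1 : ℤ))
              (fun j => if (Sum.inl (Sum.inr j) :
                  (((Fin n ⊕ (V ⊕ Fin m)) ⊕ Fin r) ⊕ Fin m) ⊕ Unit) ∈ U then -1 else 1)))
          (fun _ => if (Sum.inr () :
              (((Fin n ⊕ (V ⊕ Fin m)) ⊕ Fin r) ⊕ Fin m) ⊕ Unit) ∈ U then 1 else -1))
        (fun _ => (1 : ℤ)))
      (fun _ => (1 : ℤ)) with hε
  refine ⟨fun a => ε (f a), ?_, ?_⟩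
  · intro j _
    rcases hfj : f j with ((((i | (v1 | j1)) | iw) | ji) | uu) <;>
      simp only [hε, hfj, Sum.elim_inl, Sum.elim_inr] <;> (try split_ifs) <;> simp
  · intro c
    have key : (∑ a ∈ S, ε (f a) * Mhat ℓ ρ w (f a) c) = ∑ v ∈ U, ε v * Mhat ℓ ρ w v c :=
      (Finset.sum_image (f := fun v => ε v * Mhat ℓ ρ w v c) (g := f)
        (fun x _ y _ h => hf h)).symm
    simp only []
    rw [key]
    rcases c with e | j
    · -- E-column
      rcases hre : ρ e with v0 | j0
      · -- ρ e = inl v0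
        set K : Finset ((((Fin n ⊕ (V ⊕ Fin m)) ⊕ Fin r) ⊕ Fin m) ⊕ Unit) :=
          {Sum.inl (Sum.inl (Sum.inl (Sum.inl (ℓ e)))),
           Sum.inl (Sum.inl (Sum.inl (Sum.inr (Sum.inl v0))))} with hK
        have h1 : ∑ v ∈ U ∩ K, ε v * Mhat ℓ ρ w v (Sum.inl e)
            = ∑ v ∈ U, ε v * Mhat ℓ ρ w v (Sum.inl e) := by
          apply Finset.sum_subset Finset.inter_subset_left
          intro v hvU hvUK
          have hvK : v ∉ K := fun hk => hvUK (Finset.mem_inter.mpr ⟨hvU, hk⟩)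
          rcases v with ((((i | (v1 | j1)) | iw) | ji) | uu)
          · rw [MhatLE]
            rw [if_neg, mul_zero]
            intro h
            exact hvK (by simp [hK, ← h])
          · rw [MhatRvE, hre]
            rw [if_neg, mul_zero]
            intro h
            obtain rfl : v0 = v1 := by simpa using h
            exact hvK (by simp [hK])
          · rw [MhatRjE, hre]
            simp
          · rw [MhatWE, mul_zero]
          · rw [MhatIE, hre]
            simp
          · rw [MhatUE, mul_zero]
        rw [← h1]
        rw [Finset.inter_comm, ← Finset.sum_ite_mem]
        rw [hK, Finset.sum_insert (by simp), Finset.sum_singleton]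
        simp only [hε, Sum.elim_inl, Sum.elim_inr, MhatLE, MhatRvE, hre, if_pos rfl]
        by_cases hA : (Sum.inl (Sum.inl (Sum.inl (Sum.inl (ℓ e)))) :
            (((Fin n ⊕ (V ⊕ Fin m)) ⊕ Fin r) ⊕ Fin m) ⊕ Unit) ∈ U <;>
          by_cases hB : (Sum.inl (Sum.inl (Sum.inl (Sum.inr (Sum.inl v0)))) :
            (((Fin n ⊕ (V ⊕ Fin m)) ⊕ Fin r) ⊕ Fin m) ⊕ Unit) ∈ U <;>
          simp [hA, hB]
      · -- ρ e = inr j0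
        set K : Finset ((((Fin n ⊕ (V ⊕ Fin m)) ⊕ Fin r) ⊕ Fin m) ⊕ Unit) :=
          {Sum.inl (Sum.inl (Sum.inl (Sum.inl (ℓ e)))),
           Sum.inl (Sum.inl (Sum.inl (Sum.inr (Sum.inr j0)))),
           Sum.inl (Sum.inr j0)} with hK
        have h1 : ∑ v ∈ U ∩ K, ε v * Mhat ℓ ρ w v (Sum.inl e)
            = ∑ v ∈ U, ε v * Mhat ℓ ρ w v (Sum.inl e) := by
          apply Finset.sum_subset Finset.inter_subset_left
          intro v hvU hvUK
          have hvK : v ∉ K := fun hk => hvUK (Finset.mem_inter.mpr ⟨hvU, hk⟩)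
          rcases v with ((((i | (v1 | j1)) | iw) | ji) | uu)
          · rw [MhatLE]
            rw [if_neg, mul_zero]
            intro h
            exact hvK (by simp [hK, ← h])
          · rw [MhatRvE, hre]
            simp
          · rw [MhatRjE, hre]
            rw [if_neg, mul_zero]
            intro h
            obtain rfl : j0 = j1 := by simpa using h
            exact hvK (by simp [hK])
          · rw [MhatWE, mul_zero]
          · rw [MhatIE, hre]
            rw [if_neg, mul_zero]
            intro h
            obtain rfl : j0 = ji := by simpa using h
            exact hvK (by simp [hK])
          · rw [MhatUE, mul_zero]
        rw [← h1]
        rw [Finset.inter_comm, ← Finset.sum_ite_mem]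
        rw [hK, Finset.sum_insert (by simp), Finset.sum_insert (by simp),
          Finset.sum_singleton]
        simp only [hε, Sum.elim_inl, Sum.elim_inr, MhatLE, MhatRjE, MhatIE, hre, if_pos rfl]
        by_cases hI : (Sum.inl (Sum.inr j0) :
            (((Fin n ⊕ (V ⊕ Fin m)) ⊕ Fin r) ⊕ Fin m) ⊕ Unit) ∈ U <;>
          by_cases hA : (Sum.inl (Sum.inl (Sum.inl (Sum.inl (ℓ e)))) :
            (((Fin n ⊕ (V ⊕ Fin m)) ⊕ Fin r) ⊕ Fin m) ⊕ Unit) ∈ U <;>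
          by_cases hB : (Sum.inl (Sum.inl (Sum.inl (Sum.inr (Sum.inr j0)))) :
            (((Fin n ⊕ (V ⊕ Fin m)) ⊕ Fin r) ⊕ Fin m) ⊕ Unit) ∈ U <;>
          simp [hI, hA, hB]
    · -- m-column j
      by_cases hex : ∃ i, w i j ≠ 0
      · obtain ⟨i0, hi0⟩ := hex
        have hw1 : w i0 j = 1 := (h01 i0 j).resolve_left hi0
        set K : Finset ((((Fin n ⊕ (V ⊕ Fin m)) ⊕ Fin r) ⊕ Fin m) ⊕ Unit) :=
          {Sum.inl (Sum.inl (Sum.inr i0)), Sum.inl (Sum.inr j), Sum.inr ()} with hK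
        have h1 : ∑ v ∈ U ∩ K, ε v * Mhat ℓ ρ w v (Sum.inr j)
            = ∑ v ∈ U, ε v * Mhat ℓ ρ w v (Sum.inr j) := by
          apply Finset.sum_subset Finset.inter_subset_left
          intro v hvU hvUK
          have hvK : v ∉ K := fun hk => hvUK (Finset.mem_inter.mpr ⟨hvU, hk⟩)
          rcases v with ((((i | (v1 | j1)) | iw) | ji) | uu)
          · rw [MhatLm, mul_zero]
          · rw [MhatRvm, mul_zero]
          · rw [MhatRjm, mul_zero]
          · rw [MhatWm]
            have : w iw j = 0 := by
              by_contra hbz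
              obtain rfl : iw = i0 := hSSSI j iw i0 hbz hi0
              exact hvK (by simp [hK])
            rw [this, neg_zero, mul_zero]
          · rw [MhatIm]
            rw [if_neg, neg_zero, mul_zero]
            intro h
            obtain rfl : ji = j := h
            exact hvK (by simp [hK])
          · exact absurd (by simp [hK]) hvK
        rw [← h1]
        rw [Finset.inter_comm, ← Finset.sum_ite_mem]
        rw [hK, Finset.sum_insert (by simp), Finset.sum_insert (by simp),
          Finset.sum_singleton]
        simp only [hε, Sum.elim_inl, Sum.elim_inr, MhatWm, MhatIm, MhatUm, hw1, if_pos rfl]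
        by_cases hu : (Sum.inr () :
            (((Fin n ⊕ (V ⊕ Fin m)) ⊕ Fin r) ⊕ Fin m) ⊕ Unit) ∈ U <;>
          by_cases hI : (Sum.inl (Sum.inr j) :
            (((Fin n ⊕ (V ⊕ Fin m)) ⊕ Fin r) ⊕ Fin m) ⊕ Unit) ∈ U <;>
          by_cases hW : (Sum.inl (Sum.inl (Sum.inr i0)) :
            (((Fin n ⊕ (V ⊕ Fin m)) ⊕ Fin r) ⊕ Fin m) ⊕ Unit) ∈ U <;>
          simp [hu, hI, hW]
      · push_neg at hex
        set K : Finset ((((Fin n ⊕ (V ⊕ Fin m)) ⊕ Fin r) ⊕ Fin m) ⊕ Unit) :=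
          {Sum.inl (Sum.inr j), Sum.inr ()} with hK
        have h1 : ∑ v ∈ U ∩ K, ε v * Mhat ℓ ρ w v (Sum.inr j)
            = ∑ v ∈ U, ε v * Mhat ℓ ρ w v (Sum.inr j) := by
          apply Finset.sum_subset Finset.inter_subset_left
          intro v hvU hvUK
          have hvK : v ∉ K := fun hk => hvUK (Finset.mem_inter.mpr ⟨hvU, hk⟩)
          rcases v with ((((i | (v1 | j1)) | iw) | ji) | uu)
          · rw [MhatLm, mul_zero]
          · rw [MhatRvm, mul_zero]
          · rw [MhatRjm, mul_zero]
          · rw [MhatWm, hex iw, neg_zero, mul_zero]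
          · rw [MhatIm]
            rw [if_neg, neg_zero, mul_zero]
            intro h
            obtain rfl : ji = j := h
            exact hvK (by simp [hK])
          · exact absurd (by simp [hK]) hvK
        rw [← h1]
        rw [Finset.inter_comm, ← Finset.sum_ite_mem]
        rw [hK, Finset.sum_insert (by simp), Finset.sum_singleton]
        simp only [hε, Sum.elim_inl, Sum.elim_inr, MhatIm, MhatUm, if_pos rfl]
        by_cases hu : (Sum.inr () :
            (((Fin n ⊕ (V ⊕ Fin m)) ⊕ Fin r) ⊕ Fin m) ⊕ Unit) ∈ U <;>
          by_cases hI : (Sum.inl (Sum.inr j) :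
            (((Fin n ⊕ (V ⊕ Fin m)) ⊕ Fin r) ⊕ Fin m) ⊕ Unit) ∈ U <;>
          simp [hu, hI]
end GH

/-- If the 0-1 matrix `w` satisfies the SSSI constraint (every column of `w` contains at most
one nonzero entry), then `M̂(w)` is totally unimodular. -/
theorem Mhat_isTU_of_SSSI {n m r : ℕ} {V E : Type*} [Fintype V] [Fintype E] [DecidableEq V]
    (ℓ : E → Fin n) (ρ : E → V ⊕ Fin m)
    (hinj : Function.Injective fun e : E => (ℓ e, ρ e))
    (w : Matrix (Fin r) (Fin m) ℤ)
    (h01 : ∀ i j, w i j = 0 ∨ w i j = 1)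
    (hSSSI : ∀ j : Fin m, ∀ i i' : Fin r, w i j ≠ 0 → w i' j ≠ 0 → i = i') :
    IsTU (Mhat ℓ ρ w) :=
  GH_to_TU (Mhat ℓ ρ w) (fun k f hf S => GH_Mhat ℓ ρ w h01 hSSSI k f hf S)
end

section
/- Suppose the 0-1 matrix w (with r rows and m columns) satisfies the SSSI constraint (every column of w contains at most one nonzero entry), and the polytope P(w) is nonempty. Then for every cost vector c : Fin m → ℚ with c_j ≥ 0 for all j, there exists (y*, t*) ∈ P(w) all of whose coordinates lie in {0,1} such that Σ_j c_j t*_j ≤ Σ_j c_j t_j for every (y, t) ∈ P(w). (That is, the LP relaxation P₁^LP always has an integral optimal solution.) -/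
open Finset in
/-- The feasible region `P(w)` of the LP relaxation `P₁^LP`: pairs `(y, t)` satisfying
(C1) `∑_{e : ℓ e = v} y_e = 1` for all left vertices `v`,
(C2) `∑_{e : ρ e = u} y_e ≤ 1` for all right vertices `u`,
(C3) `∑_j w_{i j} t_j ≥ 1` for all source-SCCs `i`,
(C3') `t_j ≥ ∑_{e : ρ e = inr j} y_e` for all inputs `j`,
and the box constraints `0 ≤ y ≤ 1`, `0 ≤ t ≤ 1`. -/
def Pw {n m r : ℕ} {V E : Type*} [Fintype E] [DecidableEq V]
    (ℓ : E → Fin n) (ρ : E → V ⊕ Fin m) (w : Matrix (Fin r) (Fin m) ℝ) :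
    Set ((E → ℝ) × (Fin m → ℝ)) :=
  { yt | (∀ v : Fin n, ∑ e : E, (if ℓ e = v then yt.1 e else 0) = 1) ∧
         (∀ u : V ⊕ Fin m, ∑ e : E, (if ρ e = u then yt.1 e else 0) ≤ 1) ∧
         (∀ i : Fin r, 1 ≤ ∑ j : Fin m, w i j * yt.2 j) ∧
         (∀ j : Fin m, (∑ e : E, (if ρ e = Sum.inr j then yt.1 e else 0)) ≤ yt.2 j) ∧
         (∀ e : E, 0 ≤ yt.1 e ∧ yt.1 e ≤ 1) ∧
         (∀ j : Fin m, 0 ≤ yt.2 j ∧ yt.2 j ≤ 1) }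

/-- The feasible region `P_k(w)` of the cardinality-constrained LP relaxation `P₂^LP`:
`P(w)` intersected with `{(y, t) : ∑_j t_j ≤ k}`. -/
def Pk {n m r : ℕ} {V E : Type*} [Fintype E] [DecidableEq V]
    (ℓ : E → Fin n) (ρ : E → V ⊕ Fin m) (w : Matrix (Fin r) (Fin m) ℝ) (k : ℕ) :
    Set ((E → ℝ) × (Fin m → ℝ)) :=
  Pw ℓ ρ w ∩ { yt | ∑ j : Fin m, yt.2 j ≤ (k : ℝ) }

/-!
A linear cost attains its minimum over the compact polytope `P(w)` at an extreme point (apply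
Krein–Milman to the optimal face), so it suffices that every extreme point is a 0-1 vector.

Read every variable of `P(w)` as an edge of a bipartite multigraph: `y_e` joins `ℓ e` to `ρ e`,
and `t_j` joins the unique source SCC containing the input `j` (this is where SSSI enters) to `j`.
Counting `t` with a minus sign, every constraint of `P(w)` that can be tight says that the sum of
the edge values at one vertex is an integer. At a point with a fractional coordinate, a tight
vertex therefore cannot carry exactly one fractional edge, and a dimension count yields a nonzero
weighting of the fractional edges with zero sum at every tight vertex. Moving along it in both
directions stays inside `P(w)`, so the point is not extreme.
-/

open Finset Filter Topology

section FiberSum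

variable {ι P Q : Type*} [Fintype ι] [DecidableEq P] [DecidableEq Q]

def fiberSum {M : Type*} [AddCommMonoid M] (f : ι → P) (z : ι → M) (p : P) : M :=
  ∑ i, if f i = p then z i else 0

section AddCommMonoid

variable {M : Type*} [AddCommMonoid M]

@[simp]
theorem fiberSum_add (f : ι → P) (z z' : ι → M) (p : P) :
    fiberSum f (z + z') p = fiberSum f z p + fiberSum f z' p := by
  simp [fiberSum, ← sum_add_distrib, ite_add_zero]

@[simp]
theorem fiberSum_smul {R : Type*} [Semiring R] [Module R M] (f : ι → P) (c : R) (z : ι → M)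
    (p : P) : fiberSum f (c • z) p = c • fiberSum f z p := by
  simp [fiberSum, smul_sum]

theorem fiberSum_eq_zero_of_forall_ne {f : ι → P} (z : ι → M) {p : P} (h : ∀ i, f i ≠ p) :
    fiberSum f z p = 0 :=
  sum_eq_zero fun i _ => if_neg (h i)

theorem sum_fiberSum_of_forall_mem {f : ι → P} {T : Finset P} (h : ∀ i, f i ∈ T) (z : ι → M) :
    ∑ p ∈ T, fiberSum f z p = ∑ i, z i := by
  simp only [fiberSum, ← sum_filter]
  exact sum_fiberwise_of_maps_to (fun i _ => h i) z

theorem fiberSum_dite {s : ι → Prop} [DecidablePred s] (f : ι → P) (z : {i // s i} → M)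
    (p : P) :
    fiberSum f (fun i => if h : s i then z ⟨i, h⟩ else 0) p = fiberSum (f ∘ Subtype.val) z p := by
  have hs (k : {i // s i}) : (if f k = p then (if h : s k then z ⟨k, h⟩ else 0) else 0) =
      if f k = p then z k else 0 := by rw [dif_pos k.2]
  have hns (k : {i // ¬ s i}) :
      (if f k = p then (if h : s k then z ⟨k, h⟩ else 0) else 0) = 0 := by
    rw [dif_neg k.2, ite_self]
  rw [fiberSum, fiberSum, ← Fintype.sum_subtype_add_sum_subtype s]
  simp only [hs, hns, sum_const_zero, add_zero, Function.comp_apply]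

end AddCommMonoid

@[simp]
theorem fiberSum_neg {G : Type*} [AddCommGroup G] (f : ι → P) (z : ι → G) (p : P) :
    fiberSum f (-z) p = -fiberSum f z p := by
  rw [fiberSum, fiberSum, ← sum_neg_distrib]
  exact sum_congr rfl fun i _ => by split_ifs <;> simp

theorem exists_ne_of_fiberSum_mem {G : Type*} [AddCommGroup G] (S : AddSubgroup G)
    {f : ι → P} {a : ι → G} (k : {i // a i ∉ S}) (hk : fiberSum f a (f k) ∈ S) :
    ∃ k' : {i // a i ∉ S}, k' ≠ k ∧ f k' = f k := by
  classical
  by_contra! h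
  rw [fiberSum, ← add_sum_erase _ _ (mem_univ k.1), if_pos rfl] at hk
  refine k.2 ((S.add_mem_cancel_right (sum_mem fun i hi => ?_)).1 hk)
  split_ifs with hf
  · by_contra hi'
    exact h ⟨i, hi'⟩ (fun h' => ne_of_mem_erase hi (congrArg Subtype.val h')) hf
  · exact S.zero_mem

theorem two_le_card_fiber {f : ι → P} {i : ι} (h : ∃ i' ≠ i, f i' = f i) :
    2 ≤ #{i' | f i' = f i} := by
  obtain ⟨i', hne, hi'⟩ := h
  exact one_lt_card.2 ⟨i, by simp, i', by simp [hi'], hne.symm⟩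

theorem two_mul_card_le_card_filter {f : ι → P} {T : Finset P}
    (h : ∀ p ∈ T, 2 ≤ #{i | f i = p}) : 2 * #T ≤ #{i | f i ∈ T} :=
  mul_card_image_le_card_of_maps_to (fun i hi => (mem_filter.1 hi).2) 2 fun p hp =>
    (h p hp).trans (card_le_card fun i hi => by simp_all)

variable {K : Type*} [Field K]

def fiberSumMap (pend : ι → P) (qend : ι → Q) (TP : Finset P) (TQ : Finset Q) :
    (ι → K) →ₗ[K] (TP ⊕ TQ → K) where
  toFun z := Sum.elim (fun p => fiberSum pend z p) (fun q => fiberSum qend z q)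
  map_add' z z' := by ext (p | q) <;> simp
  map_smul' c z := by ext (p | q) <;> simp

theorem not_injective_fiberSumMap [Nonempty ι] {pend : ι → P} {qend : ι → Q} {TP : Finset P}
    {TQ : Finset Q} (hP : ∀ p ∈ TP, 2 ≤ #{i | pend i = p}) (hQ : ∀ q ∈ TQ, 2 ≤ #{i | qend i = q}) :
    ¬ Function.Injective (fiberSumMap (K := K) pend qend TP TQ) := by
  -- Injectivity would force every edge to have both endpoints in `TP` and `TQ` and the map to be
  -- bijective; but the sums of its values over `TP` and over `TQ` both equal `∑ i, z i`.
  set M := fiberSumMap (K := K) pend qend TP TQ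
  intro hinj
  have hdim : Fintype.card ι ≤ #TP + #TQ := by
    simpa using LinearMap.finrank_le_finrank_of_injective hinj
  have hcardP := two_mul_card_le_card_filter hP
  have hcardQ := two_mul_card_le_card_filter hQ
  have hIP := card_le_univ {i | pend i ∈ TP}
  have hIQ := card_le_univ {i | qend i ∈ TQ}
  have hallP : ∀ i, pend i ∈ TP := by simpa using eq_univ_of_card {i | pend i ∈ TP} (by omega)
  have hallQ : ∀ i, qend i ∈ TQ := by simpa using eq_univ_of_card {i | qend i ∈ TQ} (by omega)
  have hsurj : Function.Surjective M :=
    (LinearMap.injective_iff_surjective_of_finrank_eq_finrank (by simp; omega)).1 hinj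
  obtain ⟨i₀⟩ := ‹Nonempty ι›
  obtain ⟨z, hz⟩ := hsurj (Pi.single (Sum.inl ⟨pend i₀, hallP i₀⟩) 1)
  have htotP : ∑ p : TP, M z (Sum.inl p) = ∑ i, z i :=
    (sum_coe_sort TP _).trans (sum_fiberSum_of_forall_mem hallP z)
  have htotQ : ∑ q : TQ, M z (Sum.inr q) = ∑ i, z i :=
    (sum_coe_sort TQ _).trans (sum_fiberSum_of_forall_mem hallQ z)
  simp only [hz, Pi.single_apply, Sum.inl.injEq, reduceCtorEq, if_false, sum_const_zero,
    sum_ite_eq', mem_univ, if_true] at htotP htotQ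
  exact one_ne_zero (htotP.trans htotQ.symm)

theorem exists_ne_zero_fiberSum_eq_zero [Nonempty ι] (pend : ι → P) (qend : ι → Q)
    (SP : Set P) (SQ : Set Q) (hP : ∀ i, pend i ∈ SP → ∃ i' ≠ i, pend i' = pend i)
    (hQ : ∀ i, qend i ∈ SQ → ∃ i' ≠ i, qend i' = qend i) :
    ∃ z : ι → K, z ≠ 0 ∧ (∀ p ∈ SP, fiberSum pend z p = 0) ∧ ∀ q ∈ SQ, fiberSum qend z q = 0 := by
  classical
  set TP := (univ.filter (pend · ∈ SP)).image pend
  set TQ := (univ.filter (qend · ∈ SQ)).image qend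
  have hdegP (p) (hp : p ∈ TP) : 2 ≤ #{i | pend i = p} := by
    obtain ⟨i, hi, rfl⟩ := mem_image.1 hp
    exact two_le_card_fiber (hP i (mem_filter.1 hi).2)
  have hdegQ (q) (hq : q ∈ TQ) : 2 ≤ #{i | qend i = q} := by
    obtain ⟨i, hi, rfl⟩ := mem_image.1 hq
    exact two_le_card_fiber (hQ i (mem_filter.1 hi).2)
  obtain ⟨z, hz, hz0⟩ : ∃ z ∈ LinearMap.ker (fiberSumMap (K := K) pend qend TP TQ), z ≠ 0 :=
    Submodule.exists_mem_ne_zero_of_ne_bot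
      (mt LinearMap.ker_eq_bot.1 (not_injective_fiberSumMap hdegP hdegQ))
  refine ⟨z, hz0, fun p hp => ?_, fun q hq => ?_⟩
  · by_cases hpT : p ∈ TP
    · exact congrFun hz (Sum.inl ⟨p, hpT⟩)
    · exact fiberSum_eq_zero_of_forall_ne z fun i hi =>
        hpT (mem_image.2 ⟨i, mem_filter.2 ⟨mem_univ i, hi ▸ hp⟩, hi⟩)
  · by_cases hqT : q ∈ TQ
    · exact congrFun hz (Sum.inr ⟨q, hqT⟩)
    · exact fiberSum_eq_zero_of_forall_ne z fun i hi =>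
        hqT (mem_image.2 ⟨i, mem_filter.2 ⟨mem_univ i, hi ▸ hq⟩, hi⟩)

theorem exists_ne_zero_fiberSum_eq_zero_of_not_mem (pend : ι → P) (qend : ι → Q)
    (S : AddSubgroup K) {a : ι → K} (ha : ∃ i, a i ∉ S) :
    ∃ z : ι → K, z ≠ 0 ∧ (∀ i, a i ∈ S → z i = 0) ∧
      (∀ p, fiberSum pend a p ∈ S → fiberSum pend z p = 0) ∧
      ∀ q, fiberSum qend a q ∈ S → fiberSum qend z q = 0 := by
  classical
  obtain ⟨i₀, hi₀⟩ := ha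
  have : Nonempty {i // a i ∉ S} := ⟨⟨i₀, hi₀⟩⟩
  obtain ⟨z, hz, hzP, hzQ⟩ := exists_ne_zero_fiberSum_eq_zero (K := K)
    (pend ∘ Subtype.val) (qend ∘ Subtype.val) {p | fiberSum pend a p ∈ S}
    {q | fiberSum qend a q ∈ S} (exists_ne_of_fiberSum_mem S) (exists_ne_of_fiberSum_mem S)
  obtain ⟨k, hk⟩ := Function.ne_iff.1 hz
  refine ⟨fun i => if h : a i ∉ S then z ⟨i, h⟩ else 0, Function.ne_iff.2 ⟨k, ?_⟩,
    fun i hi => dif_neg (not_not.2 hi), fun p hp => ?_, fun q hq => ?_⟩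
  · simpa [k.2] using hk
  · rw [fiberSum_dite]; exact hzP p hp
  · rw [fiberSum_dite]; exact hzQ q hq

end FiberSum

section Extreme

variable {X : Type*} [AddCommGroup X] [Module ℝ X]

theorem IsCompact.exists_mem_extremePoints_isMinOn [TopologicalSpace X] [T2Space X]
    [IsTopologicalAddGroup X] [ContinuousSMul ℝ X] [LocallyConvexSpace ℝ X] {A : Set X}
    (hA : IsCompact A) (hne : A.Nonempty) (l : StrongDual ℝ X) :
    ∃ x ∈ A.extremePoints ℝ, IsMinOn l A x := by
  have hexp : IsExposed ℝ A ((-l).toExposed A) := ContinuousLinearMap.toExposed.isExposed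
  obtain ⟨z, hzA, hz⟩ := hA.exists_isMaxOn hne (-l).continuous.continuousOn
  obtain ⟨x, hx⟩ := (hexp.isCompact hA).extremePoints_nonempty ⟨z, hzA, hz⟩
  refine ⟨x, hexp.isExtreme.extremePoints_subset_extremePoints hx, fun y hy => ?_⟩
  simpa using hx.1.2 y hy

theorem eq_zero_of_mem_extremePoints {A : Set X} {x d : X} (hx : x ∈ A.extremePoints ℝ)
    (h : ∀ᶠ s in 𝓝 (0 : ℝ), x + s • d ∈ A) : d = 0 := by
  obtain ⟨ε, hε, hball⟩ := Metric.eventually_nhds_iff.1 h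
  have hmem (s : ℝ) (hs : |s| < ε) : x + s • d ∈ A := hball (by simpa using hs)
  have hseg : x ∈ openSegment ℝ (x + (ε / 2) • d) (x + (-(ε / 2)) • d) :=
    ⟨1 / 2, 1 / 2, by norm_num, by norm_num, by norm_num, by module⟩
  have := (mem_extremePoints.1 hx).2 _ (hmem _ (by rw [abs_of_pos (by positivity)]; linarith))
    _ (hmem _ (by rw [abs_neg, abs_of_pos (by positivity)]; linarith)) hseg
  simpa [hε.ne'] using this.1

end Extreme

theorem eventually_add_mul_le_add_mul {a b a' b' : ℝ} (h : a < a' ∨ a ≤ a' ∧ b = b') :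
    ∀ᶠ s in 𝓝 (0 : ℝ), a + s * b ≤ a' + s * b' := by
  rcases h with h | ⟨h, rfl⟩
  · exact (ContinuousAt.eventually_lt (by fun_prop) (by fun_prop) (by simpa)).mono
      fun _ => le_of_lt
  · exact Eventually.of_forall fun s => by linarith

theorem eq_zero_or_eq_one_of_mem_range_intCast {a : ℝ} (ha : 0 ≤ a ∧ a ≤ 1)
    (hZ : a ∈ (Int.castAddHom ℝ).range) : a = 0 ∨ a = 1 := by
  obtain ⟨k, rfl⟩ := hZ
  simp only [Int.coe_castAddHom] at ha ⊢
  have h0 : 0 ≤ k := by exact_mod_cast ha.1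
  have h1 : k ≤ 1 := by exact_mod_cast ha.2
  interval_cases k <;> simp

section Polytope

variable {n m r : ℕ} {V E : Type*} [Fintype E] [DecidableEq V]
  (ℓ : E → Fin n) (ρ : E → V ⊕ Fin m) (w : Matrix (Fin r) (Fin m) ℝ)

theorem mem_Pw_iff {yt : (E → ℝ) × (Fin m → ℝ)} :
    yt ∈ Pw ℓ ρ w ↔ (∀ v, fiberSum ℓ yt.1 v = 1) ∧ (∀ u, fiberSum ρ yt.1 u ≤ 1) ∧
      (∀ i, 1 ≤ ∑ j, w i j * yt.2 j) ∧ (∀ j, fiberSum ρ yt.1 (.inr j) ≤ yt.2 j) ∧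
      (∀ e, 0 ≤ yt.1 e ∧ yt.1 e ≤ 1) ∧ ∀ j, 0 ≤ yt.2 j ∧ yt.2 j ≤ 1 :=
  Iff.rfl

theorem isCompact_Pw : IsCompact (Pw ℓ ρ w) := by
  have hclosed : IsClosed (Pw ℓ ρ w) := by
    simp only [Pw, Set.ofPred_and, Set.ofPred_forall, ← Finset.sum_filter]
    refine .inter (isClosed_iInter fun _ => isClosed_eq ?_ ?_) <|
      .inter (isClosed_iInter fun _ => isClosed_le ?_ ?_) <|
      .inter (isClosed_iInter fun _ => isClosed_le ?_ ?_) <|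
      .inter (isClosed_iInter fun _ => isClosed_le ?_ ?_) <|
      .inter (isClosed_iInter fun _ => .inter (isClosed_le ?_ ?_) (isClosed_le ?_ ?_)) <|
      isClosed_iInter fun _ => .inter (isClosed_le ?_ ?_) (isClosed_le ?_ ?_)
    all_goals fun_prop
  refine (isCompact_Icc (a := 0) (b := 1)).of_isClosed_subset hclosed fun yt hyt => ?_
  obtain ⟨-, -, -, -, hy, ht⟩ := hyt
  exact ⟨⟨fun e => (hy e).1, fun j => (ht j).1⟩, fun e => (hy e).2, fun j => (ht j).2⟩

theorem eventually_add_smul_mem_Pw [Fintype V] {x d : (E → ℝ) × (Fin m → ℝ)}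
    (hx : x ∈ Pw ℓ ρ w) (hC1 : ∀ v, fiberSum ℓ d.1 v = 0)
    (hC2 : ∀ u, fiberSum ρ x.1 u < 1 ∨ fiberSum ρ d.1 u = 0)
    (hC3 : ∀ i, 1 < ∑ j, w i j * x.2 j ∨ ∑ j, w i j * d.2 j = 0)
    (hC3' : ∀ j, fiberSum ρ x.1 (.inr j) < x.2 j ∨ fiberSum ρ d.1 (.inr j) = d.2 j)
    (hy : ∀ e, d.1 e = 0 ∨ 0 < x.1 e ∧ x.1 e < 1)
    (ht : ∀ j, d.2 j = 0 ∨ 0 < x.2 j ∧ x.2 j < 1) :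
    ∀ᶠ s in 𝓝 (0 : ℝ), x + s • d ∈ Pw ℓ ρ w := by
  obtain ⟨hx1, hx2, hx3, hx3', hxy, hxt⟩ := (mem_Pw_iff ℓ ρ w).1 hx
  have hbox {a b : ℝ} (hab : 0 ≤ a ∧ a ≤ 1) (h : b = 0 ∨ 0 < a ∧ a < 1) :
      ∀ᶠ s in 𝓝 (0 : ℝ), 0 + s * 0 ≤ a + s * b ∧ a + s * b ≤ 1 + s * 0 := by
    refine (eventually_add_mul_le_add_mul ?_).and (eventually_add_mul_le_add_mul ?_) <;>
      rcases h with rfl | h <;> first | exact .inl (by linarith) | exact .inr ⟨by linarith, rfl⟩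
  have e2 := eventually_all.2 fun u => eventually_add_mul_le_add_mul
    ((hC2 u).imp_right fun h => ⟨hx2 u, h⟩)
  have e3 := eventually_all.2 fun i => eventually_add_mul_le_add_mul
    ((hC3 i).imp_right fun h => ⟨hx3 i, h.symm⟩)
  have e3' := eventually_all.2 fun j => eventually_add_mul_le_add_mul
    ((hC3' j).imp_right fun h => ⟨hx3' j, h⟩)
  have ey := eventually_all.2 fun e => hbox (hxy e) (hy e)
  have et := eventually_all.2 fun j => hbox (hxt j) (ht j)
  filter_upwards [e2, e3, e3', ey, et] with s h2 h3 h3' hy ht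
  refine (mem_Pw_iff ℓ ρ w).2
    ⟨fun v => ?_, fun u => ?_, fun i => ?_, fun j => ?_, fun e => ?_, fun j => ?_⟩
  · simp [hx1, hC1]
  · simpa using h2 u
  · simpa [mul_add, sum_add_distrib, mul_left_comm _ s, ← mul_sum] using h3 i
  · simpa using h3' j
  · simpa using hy e
  · simpa using ht j

end Polytope

section Graph

variable {n m r : ℕ} {V E : Type*} [Fintype E] [DecidableEq V]
  (ℓ : E → Fin n) (ρ : E → V ⊕ Fin m) (w : Matrix (Fin r) (Fin m) ℝ)

noncomputable def rowOf (j : Fin m) : Option (Fin r) :=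
  if h : ∃ i, w i j ≠ 0 then some h.choose else none

variable {w}

theorem rowOf_eq_some_iff (hSSSI : ∀ j : Fin m, ∀ i i' : Fin r, w i j ≠ 0 → w i' j ≠ 0 → i = i')
    {i : Fin r} {j : Fin m} : rowOf w j = some i ↔ w i j ≠ 0 := by
  unfold rowOf
  split_ifs with h
  · exact ⟨fun h' => Option.some_injective _ h' ▸ h.choose_spec,
      fun hi => congrArg some (hSSSI j _ _ h.choose_spec hi)⟩
  · push Not at h
    simp [h i]

theorem sum_mul_eq_fiberSum_rowOf (h01 : ∀ i j, w i j = 0 ∨ w i j = 1)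
    (hSSSI : ∀ j : Fin m, ∀ i i' : Fin r, w i j ≠ 0 → w i' j ≠ 0 → i = i') (g : Fin m → ℝ)
    (i : Fin r) : ∑ j, w i j * g j = fiberSum (rowOf w) g (some i) :=
  sum_congr rfl fun j _ => by rcases h01 i j with h | h <;> simp [h, rowOf_eq_some_iff hSSSI]

variable (w)

noncomputable def leftEnd : E ⊕ Fin m → Fin n ⊕ Option (Fin r) :=
  Sum.elim (Sum.inl ∘ ℓ) (Sum.inr ∘ rowOf w)

def rightEnd : E ⊕ Fin m → V ⊕ Fin m := Sum.elim ρ Sum.inr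

@[simp]
theorem fiberSum_leftEnd_inl (g : E ⊕ Fin m → ℝ) (v : Fin n) :
    fiberSum (leftEnd ℓ w) g (.inl v) = fiberSum ℓ (g ∘ .inl) v := by
  simp [fiberSum, leftEnd, Fintype.sum_sum_type]

@[simp]
theorem fiberSum_leftEnd_inr (g : E ⊕ Fin m → ℝ) (o : Option (Fin r)) :
    fiberSum (leftEnd ℓ w) g (.inr o) = fiberSum (rowOf w) (g ∘ .inr) o := by
  simp [fiberSum, leftEnd, Fintype.sum_sum_type]

@[simp]
theorem fiberSum_rightEnd_inl (g : E ⊕ Fin m → ℝ) (v : V) :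
    fiberSum (rightEnd ρ) g (.inl v) = fiberSum ρ (g ∘ .inl) (.inl v) := by
  simp [fiberSum, rightEnd, Fintype.sum_sum_type]
  rfl

@[simp]
theorem fiberSum_rightEnd_inr (g : E ⊕ Fin m → ℝ) (j : Fin m) :
    fiberSum (rightEnd ρ) g (.inr j) = fiberSum ρ (g ∘ .inl) (.inr j) + g (.inr j) := by
  simp [fiberSum, rightEnd, Fintype.sum_sum_type]
  rfl

end Graph

section Integrality

variable {n m r : ℕ} {V E : Type*} [Fintype E] [DecidableEq V]
  {ℓ : E → Fin n} {ρ : E → V ⊕ Fin m} {w : Matrix (Fin r) (Fin m) ℝ}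

theorem eventually_add_smul_mem_Pw_of_fiberSum_eq_zero [Fintype V]
    (h01 : ∀ i j, w i j = 0 ∨ w i j = 1)
    (hSSSI : ∀ j : Fin m, ∀ i i' : Fin r, w i j ≠ 0 → w i' j ≠ 0 → i = i')
    {x : (E → ℝ) × (Fin m → ℝ)} (hx : x ∈ Pw ℓ ρ w) {z : E ⊕ Fin m → ℝ}
    (hz : ∀ k, Sum.elim x.1 (-x.2) k ∈ (Int.castAddHom ℝ).range → z k = 0)
    (hzL : ∀ p, fiberSum (leftEnd ℓ w) (Sum.elim x.1 (-x.2)) p ∈ (Int.castAddHom ℝ).range →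
      fiberSum (leftEnd ℓ w) z p = 0)
    (hzR : ∀ q, fiberSum (rightEnd ρ) (Sum.elim x.1 (-x.2)) q ∈ (Int.castAddHom ℝ).range →
      fiberSum (rightEnd ρ) z q = 0) :
    ∀ᶠ s in 𝓝 (0 : ℝ), x + s • (z ∘ .inl, -(z ∘ .inr)) ∈ Pw ℓ ρ w := by
  set Z := (Int.castAddHom ℝ).range
  have hZ (k : ℤ) : (k : ℝ) ∈ Z := ⟨k, rfl⟩
  obtain ⟨hx1, hx2, hx3, hx3', hxy, hxt⟩ := (mem_Pw_iff ℓ ρ w).1 hx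
  have hC3' (j : Fin m) (h : fiberSum ρ x.1 (.inr j) = x.2 j) :
      fiberSum ρ (z ∘ .inl) (.inr j) = -z (.inr j) :=
    eq_neg_of_add_eq_zero_left <| by simpa using hzR (.inr j) (by simp [h])
  have hbox {a : ℝ} (ha : 0 ≤ a ∧ a ≤ 1) (haZ : a ∉ Z) : 0 < a ∧ a < 1 :=
    ⟨ha.1.lt_of_ne fun h => haZ (h ▸ Z.zero_mem), ha.2.lt_of_ne fun h => haZ (h ▸ ⟨1, by simp⟩)⟩
  refine eventually_add_smul_mem_Pw ℓ ρ w hx (fun v => ?_) (fun u => ?_) (fun i => ?_)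
    (fun j => ?_) (fun e => ?_) (fun j => ?_)
  · simpa using hzL (.inl v) (by simpa [hx1 v] using hZ 1)
  · refine (hx2 u).lt_or_eq.imp_right fun h => ?_
    rcases u with v | j
    · simpa using hzR (.inl v) (by simpa [h] using hZ 1)
    · have ht : x.2 j = 1 := le_antisymm (hxt j).2 (h ▸ hx3' j)
      rw [hC3' j (h.trans ht.symm), hz (.inr j) (by simpa [ht] using hZ (-1)), neg_zero]
  · refine (hx3 i).lt_or_eq.imp_right fun h => ?_
    have := hzL (.inr (some i)) (by
      simpa [fiberSum_neg, ← sum_mul_eq_fiberSum_rowOf h01 hSSSI, ← h] using hZ (-1))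
    simpa [sum_mul_eq_fiberSum_rowOf h01 hSSSI, Function.comp_def] using this
  · exact (hx3' j).lt_or_eq.imp_right fun h => by simpa using hC3' j h
  · by_cases he : x.1 e ∈ Z
    · exact .inl (hz (.inl e) he)
    · exact .inr (hbox (hxy e) he)
  · by_cases hj : x.2 j ∈ Z
    · exact .inl (by simpa using hz (.inr j) (by simpa using Z.neg_mem hj))
    · exact .inr (hbox (hxt j) hj)

theorem eq_zero_or_eq_one_of_mem_extremePoints_Pw [Fintype V]
    (h01 : ∀ i j, w i j = 0 ∨ w i j = 1)
    (hSSSI : ∀ j : Fin m, ∀ i i' : Fin r, w i j ≠ 0 → w i' j ≠ 0 → i = i')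
    {x : (E → ℝ) × (Fin m → ℝ)} (hx : x ∈ (Pw ℓ ρ w).extremePoints ℝ) :
    (∀ e, x.1 e = 0 ∨ x.1 e = 1) ∧ ∀ j, x.2 j = 0 ∨ x.2 j = 1 := by
  have hint : ∀ k, Sum.elim x.1 (-x.2) k ∈ (Int.castAddHom ℝ).range := by
    by_contra! hfrac
    obtain ⟨z, hz0, hz, hzL, hzR⟩ :=
      exists_ne_zero_fiberSum_eq_zero_of_not_mem (leftEnd ℓ w) (rightEnd ρ) _ hfrac
    have hd := eq_zero_of_mem_extremePoints hx
      (eventually_add_smul_mem_Pw_of_fiberSum_eq_zero h01 hSSSI hx.1 hz hzL hzR)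
    refine hz0 (funext fun k => ?_)
    rcases k with e | j
    · exact congrFun (congrArg Prod.fst hd) e
    · simpa using congrFun (congrArg Prod.snd hd) j
  obtain ⟨-, -, -, -, hy, ht⟩ := hx.1
  exact ⟨fun e => eq_zero_or_eq_one_of_mem_range_intCast (hy e) (hint (.inl e)),
    fun j => eq_zero_or_eq_one_of_mem_range_intCast (ht j) (by simpa using hint (.inr j))⟩

end Integrality

theorem P1LP_integral_optimal_of_SSSI_general {n m r : ℕ} {V E : Type*} [Fintype V] [Fintype E]
    [DecidableEq V] (ℓ : E → Fin n) (ρ : E → V ⊕ Fin m)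
    (w : Matrix (Fin r) (Fin m) ℝ)
    (h01 : ∀ i j, w i j = 0 ∨ w i j = 1)
    (hSSSI : ∀ j : Fin m, ∀ i i' : Fin r, w i j ≠ 0 → w i' j ≠ 0 → i = i')
    (hne : (Pw ℓ ρ w).Nonempty)
    (c : Fin m → ℚ) :
    ∃ yt ∈ Pw ℓ ρ w,
      (∀ e : E, yt.1 e = 0 ∨ yt.1 e = 1) ∧ (∀ j : Fin m, yt.2 j = 0 ∨ yt.2 j = 1) ∧
      ∀ zt ∈ Pw ℓ ρ w, ∑ j : Fin m, (c j : ℝ) * yt.2 j ≤ ∑ j : Fin m, (c j : ℝ) * zt.2 j := by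
  let cost : StrongDual ℝ ((E → ℝ) × (Fin m → ℝ)) :=
    (∑ j, (c j : ℝ) • ContinuousLinearMap.proj j) ∘L ContinuousLinearMap.snd ℝ _ _
  have hcost (yt : (E → ℝ) × (Fin m → ℝ)) : cost yt = ∑ j, (c j : ℝ) * yt.2 j := by simp [cost]
  obtain ⟨x, hx, hmin⟩ := (isCompact_Pw ℓ ρ w).exists_mem_extremePoints_isMinOn hne cost
  obtain ⟨hy, ht⟩ := eq_zero_or_eq_one_of_mem_extremePoints_Pw h01 hSSSI hx
  exact ⟨x, hx.1, hy, ht, fun zt hzt => by simpa [hcost] using hmin hzt⟩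

/-- If the 0-1 matrix `w` satisfies the SSSI constraint and `P(w)` is nonempty, then for every
nonnegative rational cost vector `c`, the LP `min ∑_j c_j t_j` over `P(w)` has an optimal
solution all of whose coordinates lie in `{0, 1}`. -/
theorem P1LP_integral_optimal_of_SSSI {n m r : ℕ} {V E : Type*} [Fintype V] [Fintype E]
    [DecidableEq V] (ℓ : E → Fin n) (ρ : E → V ⊕ Fin m)
    (hinj : Function.Injective fun e : E => (ℓ e, ρ e))
    (w : Matrix (Fin r) (Fin m) ℝ)
    (h01 : ∀ i j, w i j = 0 ∨ w i j = 1)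
    (hSSSI : ∀ j : Fin m, ∀ i i' : Fin r, w i j ≠ 0 → w i' j ≠ 0 → i = i')
    (hne : (Pw ℓ ρ w).Nonempty)
    (c : Fin m → ℚ) (hc : ∀ j, 0 ≤ c j) :
    ∃ yt ∈ Pw ℓ ρ w,
      (∀ e : E, yt.1 e = 0 ∨ yt.1 e = 1) ∧ (∀ j : Fin m, yt.2 j = 0 ∨ yt.2 j = 1) ∧
      ∀ zt ∈ Pw ℓ ρ w, ∑ j : Fin m, (c j : ℝ) * yt.2 j ≤ ∑ j : Fin m, (c j : ℝ) * zt.2 j :=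
  P1LP_integral_optimal_of_SSSI_general ℓ ρ w h01 hSSSI hne c
end

section
/- (Block-diagonal with permutable monotone blocks implies restricted TU.) Let w be a 0-1 matrix with r rows and m columns. Suppose the row indices are partitioned into classes R₁, …, R_l and the column indices into classes C₁, …, C_l such that w_{i j} = 0 whenever i ∈ R_a and j ∈ C_b with a ≠ b, and for each a ∈ {1, …, l}, the submatrix of w with rows R_a and columns C_a, after some row and column permutations, has all rows non-decreasing, or all rows non-increasing, or all columns non-decreasing, or all columns non-increasing. Then w is restrictedly TU. -/
/-- A 0-1 matrix `w` is restrictedly TU if the matrix obtained by appending the all-ones row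
to `w` is totally unimodular. -/
def RestrictedTU {r m : ℕ} (w : Matrix (Fin r) (Fin m) ℤ) : Prop :=
  IsTU (Matrix.fromRows w (Matrix.of fun (_ : Unit) (_ : Fin m) => (1 : ℤ)))

/-!
Appending the all-ones row to `w` gives a 0-1 matrix whose rows form a laminar family: two
rows of one block are nested because the block is monotone up to permutations, rows of
different blocks are disjoint, and the all-ones row contains every row.

A square 0-1 matrix with laminar rows has determinant `0` or `±1`. Take a row of least weight.
If another row contains it, subtract it from the lightest such row: this keeps the
determinant, keeps the rows 0-1 and laminar, and lowers the total weight. Otherwise the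
lightest row is disjoint from all the others, so the column of any of its ones is a unit
vector, and Laplace expansion along it reduces the size.
-/

namespace Matrix

variable {α β ι κ : Type*}

def IsZeroOne (A : Matrix α β ℤ) : Prop :=
  ∀ i j, A i j = 0 ∨ A i j = 1

def NestedOrDisjoint (u v : β → ℤ) : Prop :=
  u ≤ v ∨ v ≤ u ∨ ∀ j, u j = 0 ∨ v j = 0

def RowsLaminar (A : Matrix α β ℤ) : Prop :=
  ∀ i i', NestedOrDisjoint (A i) (A i')

def RowsNested (A : Matrix α β ℤ) : Prop :=
  ∀ i i', A i ≤ A i' ∨ A i' ≤ A i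

theorem NestedOrDisjoint.symm {u v : β → ℤ} (h : NestedOrDisjoint u v) :
    NestedOrDisjoint v u := by
  rcases h with h | h | h
  exacts [Or.inr (Or.inl h), Or.inl h, Or.inr (Or.inr fun j => (h j).symm)]

namespace IsZeroOne

variable {A : Matrix α β ℤ}

theorem nonneg (h : IsZeroOne A) (i : α) (j : β) : 0 ≤ A i j := by
  rcases h i j with h | h <;> simp [h]

theorem le_one (h : IsZeroOne A) (i : α) (j : β) : A i j ≤ 1 := by
  rcases h i j with h | h <;> simp [h]

theorem submatrix (h : IsZeroOne A) (f : ι → α) (g : κ → β) : IsZeroOne (A.submatrix f g) :=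
  fun i j => h (f i) (g j)

theorem fromRows {B : Matrix ι β ℤ} (hA : IsZeroOne A) (hB : IsZeroOne B) :
    IsZeroOne (A.fromRows B) := by
  rintro (i | i) j
  exacts [hA i j, hB i j]

theorem updateRow_sub [DecidableEq α] (h : IsZeroOne A) {i₀ i₁ : α} (hle : A i₀ ≤ A i₁) :
    IsZeroOne (A.updateRow i₁ (A i₁ - A i₀)) := by
  intro p j
  by_cases hp : p = i₁
  · subst hp
    have := hle j
    rcases h i₀ j with h₀ | h₀ <;> rcases h p j with h₁ | h₁ <;>
      simp [updateRow_self, h₀, h₁] at this ⊢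
  · simpa [updateRow_ne hp] using h p j

end IsZeroOne

namespace RowsLaminar

variable {A : Matrix α β ℤ}

theorem submatrix (h : RowsLaminar A) (f : ι → α) (g : κ → β) :
    RowsLaminar (A.submatrix f g) := by
  intro i i'
  rcases h (f i) (f i') with h | h | h
  exacts [Or.inl fun j => h (g j), Or.inr (Or.inl fun j => h (g j)),
    Or.inr (Or.inr fun j => h (g j))]

theorem fromRows_ones (h : RowsLaminar A) (hle : ∀ i j, A i j ≤ 1) :
    RowsLaminar (A.fromRows (of fun (_ : ι) (_ : β) => (1 : ℤ))) := by
  rintro (i | u) (i' | u')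
  · exact h i i'
  · exact Or.inl fun j => hle i j
  · exact Or.inr (Or.inl fun j => hle i' j)
  · exact Or.inl le_rfl

theorem updateRow_sub [DecidableEq α] (h : RowsLaminar A) (h01 : IsZeroOne A) {i₀ i₁ : α}
    (hle : A i₀ ≤ A i₁) (hmin : ∀ p, p ≠ i₀ → A i₀ ≤ A p → A i₁ ≤ A p) :
    RowsLaminar (A.updateRow i₁ (A i₁ - A i₀)) := by
  have key : ∀ p, p ≠ i₁ → NestedOrDisjoint (A p) (A i₁ - A i₀) := by
    intro p hp
    by_cases hp₀ : p = i₀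
    · subst hp₀
      refine Or.inr (Or.inr fun j => ?_)
      have := hle j; have := h01 p j; have := h01 i₁ j
      simp only [Pi.sub_apply] at *; omega
    rcases h p i₀ with hp' | hp' | hp'
    · refine Or.inr (Or.inr fun j => ?_)
      have := hp' j; have := hle j; have := h01 p j; have := h01 i₀ j; have := h01 i₁ j
      simp only [Pi.sub_apply] at *; omega
    · refine Or.inr (Or.inl fun j => ?_)
      have := hmin p hp₀ hp' j; have := h01.nonneg i₀ j
      simp only [Pi.sub_apply] at *; omega
    rcases h p i₁ with hp₁ | hp₁ | hp₁
    · refine Or.inl fun j => ?_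
      have := hp₁ j; have := hp' j; have := hle j; have := h01 p j; have := h01 i₀ j
      simp only [Pi.sub_apply] at *; omega
    · refine Or.inr (Or.inl fun j => ?_)
      have := hp₁ j; have := h01.nonneg i₀ j
      simp only [Pi.sub_apply] at *; omega
    · refine Or.inr (Or.inr fun j => ?_)
      have := hp₁ j; have := hle j; have := h01 i₀ j
      simp only [Pi.sub_apply] at *; omega
  intro p q
  by_cases hp : p = i₁ <;> by_cases hq : q = i₁
  · subst hp hq; exact Or.inl le_rfl
  · subst hp; simpa [updateRow_ne hq] using (key q hq).symm
  · subst hq; simpa [updateRow_ne hp] using key p hp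
  · simpa [updateRow_ne hp, updateRow_ne hq] using h p q

end RowsLaminar

theorem rowsNested_of_monotone_rows [LinearOrder β] {A : Matrix α β ℤ} (h01 : A.IsZeroOne)
    (hA : ∀ i, Monotone (A i)) : A.RowsNested := by
  intro i i'
  by_contra! ⟨h, h'⟩
  obtain ⟨j, hj⟩ : ∃ j, A i' j < A i j := by simpa [Pi.le_def] using h
  obtain ⟨j', hj'⟩ : ∃ j, A i j < A i' j := by simpa [Pi.le_def] using h'
  have := h01 i j; have := h01 i' j; have := h01 i j'; have := h01 i' j'
  rcases le_total j j' with hjj' | hjj'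
  · have := hA i hjj'; omega
  · have := hA i' hjj'; omega

theorem rowsNested_of_antitone_rows [LinearOrder β] {A : Matrix α β ℤ} (h01 : A.IsZeroOne)
    (hA : ∀ i, Antitone (A i)) : A.RowsNested := by
  intro i i'
  have := rowsNested_of_monotone_rows (A := A.submatrix id OrderDual.ofDual) (h01.submatrix _ _)
    (fun i => (hA i).dual_left) i i'
  exact this.imp (fun h j => h (OrderDual.toDual j)) (fun h j => h (OrderDual.toDual j))

theorem rowsNested_of_monotone [LinearOrder α] [LinearOrder β] {A : Matrix α β ℤ}
    (h01 : A.IsZeroOne)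
    (hA : (∀ i, Monotone (A i)) ∨ (∀ i, Antitone (A i)) ∨ Monotone A ∨ Antitone A) :
    A.RowsNested := by
  rcases hA with hA | hA | hA | hA
  · exact rowsNested_of_monotone_rows h01 hA
  · exact rowsNested_of_antitone_rows h01 hA
  · exact fun i i' => (le_total i i').imp (fun h => hA h) (fun h => hA h)
  · exact fun i i' => (le_total i i').imp (fun h => hA h) (fun h => hA h) |>.symm

theorem RowsNested.of_submatrix_equiv {A : Matrix α β ℤ} (σ : ι ≃ α) (τ : κ ≃ β)
    (h : (A.submatrix σ τ).RowsNested) : A.RowsNested := by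
  intro i i'
  exact (h (σ.symm i) (σ.symm i')).imp (fun h j => by simpa using h (τ.symm j))
    (fun h j => by simpa using h (τ.symm j))

theorem rowsLaminar_of_blockDiagonal {l : Type*} {A : Matrix α β ℤ} {fR : α → l} {fC : β → l}
    (hblock : ∀ i j, fR i ≠ fC j → A i j = 0)
    (hdiag : ∀ a, (A.submatrix (Subtype.val : {i // fR i = a} → α)
      (Subtype.val : {j // fC j = a} → β)).RowsNested) :
    A.RowsLaminar := by
  intro i i'
  by_cases h : fR i = fR i'
  · have le_of_block {p p'} (hp : fR p = fR i) (hp' : fR p' = fR i)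
        (hle : ∀ q : {j // fC j = fR i}, A p q ≤ A p' q) : A p ≤ A p' := by
      intro j
      by_cases hj : fC j = fR i
      · exact hle ⟨j, hj⟩
      · rw [hblock p j (hp ▸ Ne.symm hj), hblock p' j (hp' ▸ Ne.symm hj)]
    exact (hdiag (fR i) ⟨i, rfl⟩ ⟨i', h.symm⟩).imp (le_of_block rfl h.symm)
      (le_of_block h.symm rfl) |>.imp_right Or.inl
  · refine Or.inr (Or.inr fun j => ?_)
    by_cases hj : fR i = fC j
    · exact Or.inr (hblock i' j fun h' => h (hj.trans h'.symm))
    · exact Or.inl (hblock i j hj)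

theorem abs_det_eq_abs_det_submatrix_succAbove {R : Type*} [CommRing R] [LinearOrder R]
    [IsStrictOrderedRing R] {k : ℕ} (A : Matrix (Fin (k + 1)) (Fin (k + 1)) R)
    {i₀ j₀ : Fin (k + 1)} (h₁ : A i₀ j₀ = 1) (h₀ : ∀ i, i ≠ i₀ → A i j₀ = 0) :
    |A.det| = |(A.submatrix i₀.succAbove j₀.succAbove).det| := by
  rw [det_succ_column A j₀, Finset.sum_eq_single i₀ (fun i _ hi => by simp [h₀ i hi]) (by simp),
    h₁, abs_mul, abs_mul, abs_neg_one_pow, abs_one, one_mul, one_mul]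

theorem sum_sum_updateRow_sub_lt [Fintype α] [Fintype β] [DecidableEq α]
    (A : Matrix α β ℤ) (i : α) {v : β → ℤ} (hv : 0 < v) :
    ∑ p, ∑ j, A.updateRow i (A i - v) p j < ∑ p, ∑ j, A p j := by
  refine Fintype.sum_strictMono (Pi.lt_def.2 ⟨fun p => ?_, i, ?_⟩)
  · by_cases hp : p = i
    · subst hp
      exact Fintype.sum_mono (by simpa using (sub_lt_self (A p) hv).le)
    · simp [updateRow_ne hp]
  · exact Fintype.sum_strictMono (by simpa using sub_lt_self (A i) hv)

theorem abs_det_le_one_of_rowsLaminar_of_smaller {k : ℕ}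
    {A : Matrix (Fin (k + 1)) (Fin (k + 1)) ℤ} (h01 : A.IsZeroOne) (hA : A.RowsLaminar)
    (hminor : ∀ B : Matrix (Fin k) (Fin k) ℤ, B.IsZeroOne → B.RowsLaminar → |B.det| ≤ 1)
    (hsmaller : ∀ B : Matrix (Fin (k + 1)) (Fin (k + 1)) ℤ, B.IsZeroOne → B.RowsLaminar →
      ∑ i, ∑ j, B i j < ∑ i, ∑ j, A i j → |B.det| ≤ 1) :
    |A.det| ≤ 1 := by
  by_cases hzero : ∃ i, A i = 0
  · obtain ⟨i, hi⟩ := hzero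
    simp [det_eq_zero_of_row_eq_zero i (congrFun hi)]
  by_cases hdup : ∃ i i', i ≠ i' ∧ A i = A i'
  · obtain ⟨i, i', hne, heq⟩ := hdup
    simp [det_zero_of_row_eq hne heq]
  push Not at hzero hdup
  have eq_of_le {p q} (hle : A p ≤ A q) (hsum : ∑ j, A q j ≤ ∑ j, A p j) : A p = A q :=
    hle.lt_or_eq.resolve_left fun hlt => (Fintype.sum_strictMono hlt).not_ge hsum
  obtain ⟨i₀, hi₀⟩ := Finite.exists_min fun i => ∑ j, A i j
  obtain ⟨j₀, hj₀⟩ : ∃ j, A i₀ j = 1 := by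
    obtain ⟨j, hj⟩ := Function.ne_iff.1 (hzero i₀)
    exact ⟨j, (h01 i₀ j).resolve_left hj⟩
  by_cases hsup : ∃ p, p ≠ i₀ ∧ A i₀ ≤ A p
  · classical
    obtain ⟨p, hp⟩ := hsup
    obtain ⟨i₁, hi₁, hmin⟩ := Finset.exists_min_image
      {p | p ≠ i₀ ∧ A i₀ ≤ A p} (fun p => ∑ j, A p j) ⟨p, by simpa using hp⟩
    simp only [Finset.mem_filter, Finset.mem_univ, true_and] at hi₁ hmin
    have hi₁_min : ∀ p, p ≠ i₀ → A i₀ ≤ A p → A i₁ ≤ A p := by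
      intro p hp hle
      rcases hA p i₁ with h | h | h
      · exact (eq_of_le h (hmin p ⟨hp, hle⟩)).ge
      · exact h
      · have : A i₀ j₀ ≤ A p j₀ := hle j₀
        have : A i₀ j₀ ≤ A i₁ j₀ := hi₁.2 j₀
        rcases h j₀ with h | h <;> omega
    have hpos : 0 < A i₀ := Pi.lt_def.2 ⟨h01.nonneg i₀, j₀, by simp [hj₀]⟩
    have hdet : (A.updateRow i₁ (A i₁ - A i₀)).det = A.det := by
      simpa [sub_eq_add_neg] using det_updateRow_add_smul_self A hi₁.1 (-1)
    rw [← hdet]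
    exact hsmaller _ (h01.updateRow_sub hi₁.2) (hA.updateRow_sub h01 hi₁.2 hi₁_min)
      (sum_sum_updateRow_sub_lt A i₁ hpos)
  · push Not at hsup
    have hcol : ∀ p, p ≠ i₀ → A p j₀ = 0 := by
      intro p hp
      rcases hA p i₀ with h | h | h
      · exact absurd (eq_of_le h (hi₀ p)) (hdup p i₀ hp)
      · exact absurd h (hsup p hp)
      · exact (h j₀).resolve_right (by simp [hj₀])
    rw [abs_det_eq_abs_det_submatrix_succAbove A hj₀ hcol]
    exact hminor _ (h01.submatrix _ _) (hA.submatrix _ _)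

theorem abs_det_le_one_of_rowsLaminar :
    ∀ {k : ℕ} {A : Matrix (Fin k) (Fin k) ℤ}, A.IsZeroOne → A.RowsLaminar → |A.det| ≤ 1
  | 0, A, _, _ => by simp
  | k + 1, A, h01, hA => by
    induction hn : (∑ i, ∑ j, A i j).toNat using Nat.strong_induction_on generalizing A with
    | _ n ih =>
      refine abs_det_le_one_of_rowsLaminar_of_smaller h01 hA
        (fun B hB01 hB => abs_det_le_one_of_rowsLaminar hB01 hB)
        (fun B hB01 hB hlt => ih _ ?_ B hB01 hB rfl)
      have : 0 ≤ ∑ i, ∑ j, B i j :=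
        Fintype.sum_nonneg fun i => Fintype.sum_nonneg (hB01.nonneg i)
      omega

theorem isTU_of_rowsLaminar {A : Matrix α β ℤ} (h01 : A.IsZeroOne)
    (hA : A.RowsLaminar) : IsTU A := by
  intro k f g _ _
  have := abs_le.1 (abs_det_le_one_of_rowsLaminar (h01.submatrix f g) (hA.submatrix f g))
  omega

end Matrix

/-- Block-diagonal with permutable monotone blocks implies restricted TU: if the rows and
columns of the 0-1 matrix `w` are partitioned into classes (via `fR`, `fC`) such that
`w_{i j} = 0` whenever `i` and `j` lie in different classes, and for each class `a` the
diagonal block of `w` on class `a`, after some row and column permutations, has all rows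
non-decreasing, or all rows non-increasing, or all columns non-decreasing, or all columns
non-increasing, then `w` is restrictedly TU. -/
theorem restrictedTU_of_blockDiagMonotone {r m : ℕ} (w : Matrix (Fin r) (Fin m) ℤ)
    (h01 : ∀ i j, w i j = 0 ∨ w i j = 1)
    (l : ℕ) (fR : Fin r → Fin l) (fC : Fin m → Fin l)
    (hblock : ∀ (i : Fin r) (j : Fin m), fR i ≠ fC j → w i j = 0)
    (hmono : ∀ a : Fin l,
      ∃ (σ : Equiv.Perm {i : Fin r // fR i = a}) (τ : Equiv.Perm {j : Fin m // fC j = a}),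
        (∀ (i : {i : Fin r // fR i = a}) (j j' : {j : Fin m // fC j = a}), j ≤ j' →
          w (σ i) (τ j) ≤ w (σ i) (τ j')) ∨
        (∀ (i : {i : Fin r // fR i = a}) (j j' : {j : Fin m // fC j = a}), j ≤ j' →
          w (σ i) (τ j') ≤ w (σ i) (τ j)) ∨
        (∀ (j : {j : Fin m // fC j = a}) (i i' : {i : Fin r // fR i = a}), i ≤ i' →
          w (σ i) (τ j) ≤ w (σ i') (τ j)) ∨
        (∀ (j : {j : Fin m // fC j = a}) (i i' : {i : Fin r // fR i = a}), i ≤ i' →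
          w (σ i') (τ j) ≤ w (σ i) (τ j))) :
    RestrictedTU w := by
  have hlaminar : w.RowsLaminar := by
    refine Matrix.rowsLaminar_of_blockDiagonal hblock fun a => ?_
    obtain ⟨σ, τ, hστ⟩ := hmono a
    refine .of_submatrix_equiv σ τ (Matrix.rowsNested_of_monotone (fun i j => h01 _ _) ?_)
    rcases hστ with h | h | h | h
    exacts [Or.inl h, Or.inr (Or.inl h), Or.inr (Or.inr (Or.inl fun i i' hi j => h j i i' hi)),
      Or.inr (Or.inr (Or.inr fun i i' hi j => h j i i' hi))]
  exact Matrix.isTU_of_rowsLaminar (Matrix.IsZeroOne.fromRows h01 fun _ _ => Or.inr rfl)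
    (hlaminar.fromRows_ones (Matrix.IsZeroOne.le_one h01))
end

section
/- (LP lower bound via minimum-cost matching.) Let Q be the polytope of pairs (y, t) ∈ ℝ^E × ℝ^m satisfying constraints (C1), (C2), (C3') and 0 ≤ y_e ≤ 1, 0 ≤ t_j ≤ 1 (i.e., the feasible region P(w) with the covering constraint (C3) removed; Q does not depend on w). Fix a cost vector c : Fin m → ℚ with c_j ≥ 0 for all j. If Q is nonempty, then there exists (y°, t°) ∈ Q with all coordinates in {0,1} minimizing Σ_j c_j t_j over Q; moreover, for every 0-1 matrix w with r rows and m columns, the minimum value of Σ_j c_j t_j over Q is less than or equal to Σ_j c_j t_j for every (y, t) ∈ P(w). (Hence the optimal value c*_LP of the LP relaxation P₁^LP is at least the minimum cost c*_mat of input vertices matched in a maximum matching of B(A,B).) -/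
/-- The polytope `Q`: the feasible region `P(w)` with the covering constraint (C3) removed
(it does not depend on `w`). -/
def Qset {n m : ℕ} {V E : Type*} [Fintype E] [DecidableEq V]
    (ℓ : E → Fin n) (ρ : E → V ⊕ Fin m) : Set ((E → ℝ) × (Fin m → ℝ)) :=
  { yt | (∀ v : Fin n, ∑ e : E, (if ℓ e = v then yt.1 e else 0) = 1) ∧
         (∀ u : V ⊕ Fin m, ∑ e : E, (if ρ e = u then yt.1 e else 0) ≤ 1) ∧
         (∀ j : Fin m, (∑ e : E, (if ρ e = Sum.inr j then yt.1 e else 0)) ≤ yt.2 j) ∧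
         (∀ e : E, 0 ≤ yt.1 e ∧ yt.1 e ≤ 1) ∧
         (∀ j : Fin m, 0 ≤ yt.2 j ∧ yt.2 j ≤ 1) }

open Finset Matrix

namespace Equiv.Perm

variable {ι R : Type*} [DecidableEq ι] [Zero R] [One R]

theorem permMatrix_apply (σ : Perm ι) (i j : ι) :
    σ.permMatrix R i j = if σ i = j then 1 else 0 := by
  simp [permMatrix, PEquiv.toMatrix_apply]

end Equiv.Perm

section Birkhoff

variable {𝕜 ι : Type*} [Field 𝕜] [LinearOrder 𝕜] [IsStrictOrderedRing 𝕜]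
  [Fintype ι] [DecidableEq ι]

theorem exists_perm_pos_and_map_permMatrix_le {M : Matrix ι ι 𝕜}
    (hM : M ∈ doublyStochastic 𝕜 ι) (φ : Matrix ι ι 𝕜 →ₗ[𝕜] 𝕜) :
    ∃ σ : Equiv.Perm ι, (∀ i, 0 < M i (σ i)) ∧ φ (σ.permMatrix 𝕜) ≤ φ M := by
  obtain ⟨w, hw0, hw1, rfl⟩ := exists_eq_sum_perm_of_mem_doublyStochastic hM
  set S : Finset (Equiv.Perm ι) := {σ | w σ ≠ 0}
  have hS : 0 < ∑ σ ∈ S, w σ := by rw [sum_filter_ne_zero, hw1]; exact one_pos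
  obtain ⟨σ, hσS, hσ⟩ := S.exists_mem_eq_inf' (nonempty_of_sum_ne_zero hS.ne')
    fun σ => φ (σ.permMatrix 𝕜)
  have hwσ : 0 < w σ := (hw0 σ).lt_of_ne' (mem_filter.1 hσS).2
  refine ⟨σ, fun i => ?_, ?_⟩
  · calc 0 < w σ * σ.permMatrix 𝕜 i (σ i) := by simpa [Equiv.Perm.permMatrix_apply] using hwσ
      _ ≤ ∑ τ, w τ * τ.permMatrix 𝕜 i (σ i) :=
        single_le_sum (f := fun τ => w τ * τ.permMatrix 𝕜 i (σ i))
          (fun τ _ => mul_nonneg (hw0 τ) (by rw [Equiv.Perm.permMatrix_apply]; positivity))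
          (mem_univ σ)
      _ = (∑ τ, w τ • τ.permMatrix 𝕜) i (σ i) := by simp [Matrix.sum_apply]
  · calc φ (σ.permMatrix 𝕜) = S.inf' _ fun τ => φ (τ.permMatrix 𝕜) := hσ.symm
      _ ≤ S.centerMass w fun τ => φ (τ.permMatrix 𝕜) := inf_le_centerMass (fun τ _ => hw0 τ) hS
      _ = φ (∑ τ, w τ • τ.permMatrix 𝕜) := by
        rw [centerMass, sum_filter_ne_zero, hw1, inv_one, one_smul, map_sum]
        rw [sum_filter_of_ne fun τ _ h => left_ne_zero_of_smul h]
        simp only [map_smul]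

end Birkhoff

section FractionalMatching

variable {𝕜 L R : Type*} [Field 𝕜] [LinearOrder 𝕜] [IsStrictOrderedRing 𝕜]
  [Fintype L] [Fintype R] [DecidableEq L] [DecidableEq R]
  {Y : Matrix L R 𝕜}

theorem fromBlocks_mem_doublyStochastic (hY : ∀ v u, 0 ≤ Y v u) (hrow : ∀ v, ∑ u, Y v u = 1)
    (hcol : ∀ u, ∑ v, Y v u ≤ 1) :
    fromBlocks 0 Y Yᵀ (diagonal fun u => 1 - ∑ v, Y v u) ∈ doublyStochastic 𝕜 (L ⊕ R) := by
  refine mem_doublyStochastic_iff_sum.2 ⟨?_, ?_, ?_⟩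
  · rintro (v | u) (v' | u')
    · exact le_rfl
    · exact hY v u'
    · exact hY v' u
    · by_cases h : u = u' <;> simp [h, hcol]
  · rintro (v | u) <;> simp [Fintype.sum_sum_type, hrow, diagonal_apply]
  · rintro (v | u) <;> simp [Fintype.sum_sum_type, hrow, diagonal_apply]

theorem exists_injective_pos_and_sum_le (hY : ∀ v u, 0 ≤ Y v u)
    (hrow : ∀ v, ∑ u, Y v u = 1) (hcol : ∀ u, ∑ v, Y v u ≤ 1) (κ : R → 𝕜) :
    ∃ f : L → R, Function.Injective f ∧ (∀ v, 0 < Y v (f v)) ∧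
      ∑ v, κ (f v) ≤ ∑ u, κ u * ∑ v, Y v u := by
  let φ : Matrix (L ⊕ R) (L ⊕ R) 𝕜 →ₗ[𝕜] 𝕜 :=
    ∑ u, ∑ v, κ u • entryLinearMap 𝕜 𝕜 (Sum.inl v) (Sum.inr u)
  have hφ (A : Matrix (L ⊕ R) (L ⊕ R) 𝕜) : φ A = ∑ u, κ u * ∑ v, A (Sum.inl v) (Sum.inr u) := by
    simp [φ, LinearMap.sum_apply, mul_sum]
  obtain ⟨σ, hσpos, hσle⟩ := exists_perm_pos_and_map_permMatrix_le
    (fromBlocks_mem_doublyStochastic hY hrow hcol) φ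
  have hσ (v : L) : ∃ u, σ (Sum.inl v) = Sum.inr u ∧ 0 < Y v u := by
    have := hσpos (Sum.inl v)
    rcases h : σ (Sum.inl v) with _ | u
    · simp [h] at this -- the `L × L` block vanishes
    · exact ⟨u, rfl, by simpa [h] using this⟩
  choose f hfσ hfpos using hσ
  refine ⟨f, fun v v' h => ?_, hfpos, ?_⟩
  · simpa using σ.injective ((hfσ v).trans ((congrArg Sum.inr h).trans (hfσ v').symm))
  · calc ∑ v, κ (f v) = φ (σ.permMatrix 𝕜) := by
          simp only [hφ, Equiv.Perm.permMatrix_apply, hfσ, Sum.inr.injEq, mul_sum, mul_ite,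
            mul_one, mul_zero]
          rw [sum_comm]
          simp
      _ ≤ _ := hσle
      _ = ∑ u, κ u * ∑ v, Y v u := by simp [hφ]

end FractionalMatching

section Fibers

variable {α β : Type*} [Fintype α] [DecidableEq β]

def fiberCount (g : α → β) (b : β) : ℝ := ∑ a, if g a = b then 1 else 0

theorem fiberCount_eq_zero_or_one {g : α → β} (hg : Function.Injective g) (b : β) :
    fiberCount g b = 0 ∨ fiberCount g b = 1 := by
  have : #{a | g a = b} ≤ 1 := card_le_one.2 fun a ha a' ha' => by
    simp only [mem_filter] at ha ha'
    exact hg (ha.2.trans ha'.2.symm)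
  rw [fiberCount, sum_boole]
  interval_cases #{a | g a = b} <;> simp

theorem sum_ite_fiberCount [Fintype β] (g : α → β) (p : β → Prop) [DecidablePred p] :
    ∑ b, (if p b then fiberCount g b else 0) = ∑ a, if p (g a) then 1 else 0 := by
  rw [← sum_filter]
  simp only [fiberCount]
  rw [sum_comm]
  simp

theorem sum_mul_fiberCount [Fintype β] (g : α → β) (κ : β → ℝ) :
    ∑ b, κ b * fiberCount g b = ∑ a, κ (g a) := by
  simp only [fiberCount, mul_sum, mul_ite, mul_one, mul_zero]
  rw [sum_comm]
  simp

end Fibers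

section Edges

variable {L R E : Type*} [Fintype L] [Fintype R] [Fintype E] [DecidableEq L] [DecidableEq R]
  (ℓ : E → L) (ρ : E → R)

theorem exists_matching_sum_le {y : E → ℝ} (hy : ∀ e, 0 ≤ y e)
    (hleft : ∀ v, ∑ e, (if ℓ e = v then y e else 0) = 1)
    (hright : ∀ u, ∑ e, (if ρ e = u then y e else 0) ≤ 1) (κ : R → ℝ) :
    ∃ g : L → E, (∀ v, ℓ (g v) = v) ∧ Function.Injective (ρ ∘ g) ∧
      ∑ v, κ (ρ (g v)) ≤ ∑ u, κ u * ∑ e, (if ρ e = u then y e else 0) := by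
  set Y : Matrix L R ℝ := fun v u => ∑ e, if ℓ e = v ∧ ρ e = u then y e else 0
  have hrow v : ∑ u, Y v u = ∑ e, (if ℓ e = v then y e else 0) := by
    simp only [Y, ite_and]
    rw [sum_comm]
    simp
  have hcol u : ∑ v, Y v u = ∑ e, (if ρ e = u then y e else 0) := by
    simp only [Y, ite_and]
    rw [sum_comm]
    simp
  obtain ⟨f, hf, hpos, hle⟩ := exists_injective_pos_and_sum_le (Y := Y)
    (fun v u => sum_nonneg fun e _ => by split_ifs <;> simp [hy])
    (fun v => (hrow v).trans (hleft v)) (fun u => (hcol u).trans_le (hright u)) κ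
  have hedge v : ∃ e, ℓ e = v ∧ ρ e = f v := by
    obtain ⟨e, -, he⟩ := exists_ne_zero_of_sum_ne_zero (hpos v).ne'
    exact ⟨e, by_contra fun h => he (if_neg h)⟩
  choose g hgℓ hgρ using hedge
  refine ⟨g, hgℓ, ?_, ?_⟩
  · rwa [show ρ ∘ g = f from funext hgρ]
  · simpa [hgρ, hcol] using hle

end Edges

theorem finite_setOf_zero_or_one {α β : Type*} [Finite α] [Finite β] :
    {p : (α → ℝ) × (β → ℝ) | (∀ a, p.1 a = 0 ∨ p.1 a = 1) ∧ ∀ b, p.2 b = 0 ∨ p.2 b = 1}.Finite := by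
  have h01 : ({0, 1} : Set ℝ).Finite := by simp
  exact ((Set.Finite.pi' fun _ => h01).prod (Set.Finite.pi' fun _ => h01)).subset
    fun _ ⟨hy, ht⟩ => ⟨hy, ht⟩

section Qset

variable {n m : ℕ} {V E : Type*} [Fintype E] [DecidableEq V] (ℓ : E → Fin n) (ρ : E → V ⊕ Fin m)

theorem Pw_subset_Qset {r : ℕ} (w : Matrix (Fin r) (Fin m) ℝ) : Pw ℓ ρ w ⊆ Qset ℓ ρ :=
  fun _ ⟨h1, h2, _, h4, h5, h6⟩ => ⟨h1, h2, h4, h5, h6⟩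

theorem exists_zero_one_mem_Qset_sum_le [Fintype V] {c : Fin m → ℝ} (hc : ∀ j, 0 ≤ c j)
    {zt : (E → ℝ) × (Fin m → ℝ)} (hzt : zt ∈ Qset ℓ ρ) :
    ∃ yt ∈ Qset ℓ ρ, ((∀ e, yt.1 e = 0 ∨ yt.1 e = 1) ∧ ∀ j, yt.2 j = 0 ∨ yt.2 j = 1) ∧
      ∑ j, c j * yt.2 j ≤ ∑ j, c j * zt.2 j := by
  classical
  obtain ⟨hleft, hright, hcover, hy, -⟩ := hzt
  let κ : V ⊕ Fin m → ℝ := Sum.elim 0 c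
  obtain ⟨g, hgℓ, hgρ, hcost⟩ := exists_matching_sum_le ℓ ρ (fun e => (hy e).1) hleft hright κ
  have hg : Function.Injective g := Function.LeftInverse.injective hgℓ
  have hfiber (p : E → Prop) [DecidablePred p] :
      ∑ e, (if p e then fiberCount g e else 0) = ∑ v, if p (g v) then 1 else 0 :=
    sum_ite_fiberCount g p
  have hunit {x : ℝ} (h : x = 0 ∨ x = 1) : 0 ≤ x ∧ x ≤ 1 := by
    rcases h with rfl | rfl <;> norm_num
  refine ⟨(fiberCount g, fun j => fiberCount (ρ ∘ g) (Sum.inr j)), ⟨fun v => ?_, fun u => ?_,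
    fun j => (hfiber _).le, fun e => hunit (fiberCount_eq_zero_or_one hg e),
    fun j => hunit (fiberCount_eq_zero_or_one hgρ _)⟩,
    ⟨fiberCount_eq_zero_or_one hg, fun j => fiberCount_eq_zero_or_one hgρ _⟩, ?_⟩
  · simp [hfiber, hgℓ]
  · exact (hfiber _).trans_le (hunit (fiberCount_eq_zero_or_one hgρ u)).2
  · calc ∑ j, c j * fiberCount (ρ ∘ g) (Sum.inr j)
        = ∑ u, κ u * fiberCount (ρ ∘ g) u := by simp [κ, Fintype.sum_sum_type]
      _ = ∑ v, κ (ρ (g v)) := sum_mul_fiberCount _ _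
      _ ≤ ∑ u, κ u * ∑ e, (if ρ e = u then zt.1 e else 0) := hcost
      _ = ∑ j, c j * ∑ e, (if ρ e = Sum.inr j then zt.1 e else 0) := by
        simp [κ, Fintype.sum_sum_type]
      _ ≤ ∑ j, c j * zt.2 j := sum_le_sum fun j _ => mul_le_mul_of_nonneg_left (hcover j) (hc j)

end Qset

theorem LP_lowerBound_via_matching_general {n m : ℕ} (r : ℕ) {V E : Type*} [Fintype V] [Fintype E]
    [DecidableEq V] (ℓ : E → Fin n) (ρ : E → V ⊕ Fin m)
    (c : Fin m → ℚ) (hc : ∀ j, 0 ≤ c j)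
    (hne : (Qset ℓ ρ).Nonempty) :
    ∃ yt ∈ Qset ℓ ρ,
      (∀ e : E, yt.1 e = 0 ∨ yt.1 e = 1) ∧ (∀ j : Fin m, yt.2 j = 0 ∨ yt.2 j = 1) ∧
      (∀ zt ∈ Qset ℓ ρ, ∑ j : Fin m, (c j : ℝ) * yt.2 j ≤ ∑ j : Fin m, (c j : ℝ) * zt.2 j) ∧
      ∀ w : Matrix (Fin r) (Fin m) ℝ, (∀ i j, w i j = 0 ∨ w i j = 1) →
        ∀ zt ∈ Pw ℓ ρ w, ∑ j : Fin m, (c j : ℝ) * yt.2 j ≤ ∑ j : Fin m, (c j : ℝ) * zt.2 j := by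
  set cost : (E → ℝ) × (Fin m → ℝ) → ℝ := fun yt => ∑ j, (c j : ℝ) * yt.2 j
  set B := Qset ℓ ρ ∩
    {yt | (∀ e, yt.1 e = 0 ∨ yt.1 e = 1) ∧ ∀ j, yt.2 j = 0 ∨ yt.2 j = 1}
  have hround : ∀ zt ∈ Qset ℓ ρ, ∃ yt ∈ B, cost yt ≤ cost zt := fun zt hzt => by
    obtain ⟨yt, hyt, h01, hle⟩ :=
      exists_zero_one_mem_Qset_sum_le ℓ ρ (c := fun j => (c j : ℝ)) (by exact_mod_cast hc) hzt
    exact ⟨yt, ⟨hyt, h01⟩, hle⟩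
  obtain ⟨zt, hzt⟩ := hne
  obtain ⟨yt, ⟨hytQ, hy01, ht01⟩, hmin⟩ := Set.exists_min_image B cost
    (finite_setOf_zero_or_one.inter_of_right _) (let ⟨yt, hyt, _⟩ := hround zt hzt; ⟨yt, hyt⟩)
  have hQmin : ∀ zt ∈ Qset ℓ ρ, cost yt ≤ cost zt := fun zt hzt =>
    let ⟨yt', hyt', hle⟩ := hround zt hzt
    (hmin yt' hyt').trans hle
  exact ⟨yt, hytQ, hy01, ht01, hQmin, fun w _ zt hzt => hQmin zt (Pw_subset_Qset ℓ ρ w hzt)⟩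

/-- LP lower bound via minimum-cost matching: if `Q` is nonempty then the LP
`min ∑_j c_j t_j` over `Q` has a 0-1 optimal solution, and its value is a lower bound on
`∑_j c_j t_j` over `P(w)` for every 0-1 matrix `w` (so `c*_LP ≥ c*_mat`). -/
theorem LP_lowerBound_via_matching {n m : ℕ} (r : ℕ) {V E : Type*} [Fintype V] [Fintype E]
    [DecidableEq V] (ℓ : E → Fin n) (ρ : E → V ⊕ Fin m)
    (hinj : Function.Injective fun e : E => (ℓ e, ρ e))
    (c : Fin m → ℚ) (hc : ∀ j, 0 ≤ c j)
    (hne : (Qset ℓ ρ).Nonempty) :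
    ∃ yt ∈ Qset ℓ ρ,
      (∀ e : E, yt.1 e = 0 ∨ yt.1 e = 1) ∧ (∀ j : Fin m, yt.2 j = 0 ∨ yt.2 j = 1) ∧
      (∀ zt ∈ Qset ℓ ρ, ∑ j : Fin m, (c j : ℝ) * yt.2 j ≤ ∑ j : Fin m, (c j : ℝ) * zt.2 j) ∧
      ∀ w : Matrix (Fin r) (Fin m) ℝ, (∀ i j, w i j = 0 ∨ w i j = 1) →
        ∀ zt ∈ Pw ℓ ρ w, ∑ j : Fin m, (c j : ℝ) * yt.2 j ≤ ∑ j : Fin m, (c j : ℝ) * zt.2 j :=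
  LP_lowerBound_via_matching_general r ℓ ρ c hc hne
end

section
/- (LP-rounding yields a feasible integral solution.) Let w be any 0-1 matrix with r rows and m columns, and let (y*, t*) ∈ P(w). Define t' : Fin m → ℝ by t'_j = 1 if t*_j > 0 and t'_j = 0 otherwise. Then there exists y' : E → ℝ with all entries in {0,1} such that (y', t') ∈ P(w). -/
/-- LP-rounding yields a feasible integral solution: rounding up all positive `t`-coordinates
of a feasible point of `P(w)` gives a 0-1 vector `t'` such that `(y', t') ∈ P(w)` for some
0-1 vector `y'`. -/
theorem LP_rounding_feasible {n m r : ℕ} {V E : Type*} [Fintype V] [Fintype E]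
    [DecidableEq V] (ℓ : E → Fin n) (ρ : E → V ⊕ Fin m)
    (hinj : Function.Injective fun e : E => (ℓ e, ρ e))
    (w : Matrix (Fin r) (Fin m) ℝ)
    (h01 : ∀ i j, w i j = 0 ∨ w i j = 1)
    (yt : (E → ℝ) × (Fin m → ℝ)) (hyt : yt ∈ Pw ℓ ρ w)
    (t' : Fin m → ℝ) (ht' : ∀ j, t' j = if 0 < yt.2 j then 1 else 0) :
    ∃ y' : E → ℝ, (∀ e : E, y' e = 0 ∨ y' e = 1) ∧ (y', t') ∈ Pw ℓ ρ w := by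
  classical
  obtain ⟨hC1, hC2, hC3, hC3', hbox, htbox⟩ := hyt
  set y := yt.1 with hy
  set t := yt.2 with ht
  -- neighborhoods in the support graph
  set N : Fin n → Finset (V ⊕ Fin m) :=
    fun v => (Finset.univ.filter (fun e => ℓ e = v ∧ 0 < y e)).image ρ with hNdef
  have hNmem : ∀ v u, u ∈ N v ↔ ∃ e, ℓ e = v ∧ 0 < y e ∧ ρ e = u := by
    intro v u
    simp only [hNdef, Finset.mem_image, Finset.mem_filter, Finset.mem_univ, true_and]
    constructor
    · rintro ⟨e, ⟨h1, h2⟩, h3⟩; exact ⟨e, h1, h2, h3⟩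
    · rintro ⟨e, h1, h2, h3⟩; exact ⟨e, ⟨h1, h2⟩, h3⟩
  have hall : ∀ s : Finset (Fin n), s.card ≤ (s.biUnion N).card := by
    intro s
    set T := s.biUnion N with hT
    have key : (s.card : ℝ) ≤ (T.card : ℝ) := by
      have h1 : (s.card : ℝ) = ∑ e : E, (if ℓ e ∈ s then y e else 0) := by
        calc (s.card : ℝ) = ∑ v ∈ s, (1 : ℝ) := by simp
          _ = ∑ v ∈ s, ∑ e : E, (if ℓ e = v then y e else 0) :=
              Finset.sum_congr rfl fun v _ => (hC1 v).symm
          _ = ∑ e : E, ∑ v ∈ s, (if ℓ e = v then y e else 0) := Finset.sum_comm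
          _ = ∑ e : E, (if ℓ e ∈ s then y e else 0) := by
              refine Finset.sum_congr rfl fun e _ => ?_
              simp [Finset.sum_ite_eq' s (ℓ e) (fun _ => y e)]
      have h2 : ∑ e : E, (if ℓ e ∈ s then y e else 0)
          ≤ ∑ e : E, (if ρ e ∈ T then y e else 0) := by
        refine Finset.sum_le_sum fun e _ => ?_
        by_cases hls : ℓ e ∈ s
        · rcases lt_or_eq_of_le (hbox e).1 with hpos | hzero
          · have hmemT : ρ e ∈ T := by
              rw [hT, Finset.mem_biUnion]
              exact ⟨ℓ e, hls, (hNmem (ℓ e) (ρ e)).2 ⟨e, rfl, hpos, rfl⟩⟩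
            simp [hls, hmemT]
          · simp only [hls, if_true, ← hzero]
            split <;> simp
        · simp only [hls, if_false]
          split
          · exact (hbox e).1
          · exact le_refl 0
      have h3 : ∑ e : E, (if ρ e ∈ T then y e else 0) ≤ (T.card : ℝ) := by
        calc ∑ e : E, (if ρ e ∈ T then y e else 0)
            = ∑ e : E, ∑ u ∈ T, (if ρ e = u then y e else 0) := by
              refine Finset.sum_congr rfl fun e _ => ?_
              simp [Finset.sum_ite_eq' T (ρ e) (fun _ => y e)]
          _ = ∑ u ∈ T, ∑ e : E, (if ρ e = u then y e else 0) := Finset.sum_comm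
          _ ≤ ∑ u ∈ T, (1 : ℝ) := Finset.sum_le_sum fun u _ => hC2 u
          _ = (T.card : ℝ) := by simp
      linarith
    exact_mod_cast key
  obtain ⟨f, hfinj, hfmem⟩ := (Finset.all_card_le_biUnion_card_iff_exists_injective N).1 hall
  refine ⟨fun e => if ρ e = f (ℓ e) then 1 else 0,
    fun e => by by_cases h : ρ e = f (ℓ e) <;> simp [h], ?_⟩
  have ht'le : ∀ j, t j ≤ t' j := by
    intro j
    rw [ht' j]
    by_cases h : 0 < t j
    · rw [if_pos h]; exact (htbox j).2
    · rw [if_neg h]; exact le_of_not_gt h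
  -- C2 for the rounded y'
  have hC2' : ∀ u : V ⊕ Fin m,
      ∑ e : E, (if ρ e = u then (if ρ e = f (ℓ e) then (1:ℝ) else 0) else 0) ≤ 1 := by
    intro u
    have hcard : (Finset.univ.filter (fun e : E => ρ e = u ∧ ρ e = f (ℓ e))).card ≤ 1 := by
      refine Finset.card_le_one.2 fun e1 h1 e2 h2 => ?_
      simp only [Finset.mem_filter, Finset.mem_univ, true_and] at h1 h2
      have hl : ℓ e1 = ℓ e2 := hfinj (by rw [← h1.2, ← h2.2, h1.1, h2.1])
      exact hinj (by simp [hl, h1.1, h2.1] : (fun e => (ℓ e, ρ e)) e1 = (fun e => (ℓ e, ρ e)) e2)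
    calc ∑ e : E, (if ρ e = u then (if ρ e = f (ℓ e) then (1:ℝ) else 0) else 0)
        = ∑ e : E, (if ρ e = u ∧ ρ e = f (ℓ e) then (1:ℝ) else 0) := by
          refine Finset.sum_congr rfl fun e _ => ?_
          by_cases h1 : ρ e = u <;> by_cases h2 : ρ e = f (ℓ e) <;> simp [h1, h2]
      _ = ((Finset.univ.filter (fun e : E => ρ e = u ∧ ρ e = f (ℓ e))).card : ℝ) := by
          rw [Finset.sum_boole]
      _ ≤ 1 := by exact_mod_cast hcard
  refine ⟨?_, ?_, ?_, ?_, ?_, ?_⟩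
  · -- C1
    dsimp only
    intro v
    obtain ⟨e0, he0l, he0pos, he0r⟩ := (hNmem v (f v)).1 (hfmem v)
    rw [Finset.sum_eq_single e0]
    · simp [he0l, he0r]
    · intro e _ hne
      by_cases h1 : ℓ e = v
      · by_cases h2 : ρ e = f (ℓ e)
        · exfalso
          apply hne
          apply hinj
          show (ℓ e, ρ e) = (ℓ e0, ρ e0)
          rw [h1, he0l, he0r]
          rw [h2, h1]
        · have h2' : ρ e ≠ f v := by rw [← h1]; exact h2
          simp [h1, h2']
      · simp [h1]
    · intro h; exact absurd (Finset.mem_univ e0) h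
  · -- C2
    dsimp only
    exact hC2'
  · -- C3
    dsimp only
    intro i
    have hw0 : ∀ j, 0 ≤ w i j := fun j => by rcases h01 i j with h | h <;> simp [h]
    calc (1 : ℝ) ≤ ∑ j : Fin m, w i j * t j := hC3 i
      _ ≤ ∑ j : Fin m, w i j * t' j :=
          Finset.sum_le_sum fun j _ => mul_le_mul_of_nonneg_left (ht'le j) (hw0 j)
  · -- C3'
    dsimp only
    intro j
    by_cases hpos : 0 < t j
    · rw [ht' j, if_pos hpos]
      exact hC2' (Sum.inr j)
    · have htj : t j = 0 := le_antisymm (le_of_not_gt hpos) (htbox j).1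
      rw [ht' j, if_neg hpos]
      have hzero : ∀ e : E, ρ e = Sum.inr j → y e = 0 := by
        intro e he
        have hsum0 : ∑ e : E, (if ρ e = Sum.inr j then y e else 0) = 0 := by
          have := hC3' j
          rw [htj] at this
          have hnn : 0 ≤ ∑ e : E, (if ρ e = Sum.inr j then y e else 0) :=
            Finset.sum_nonneg fun e _ => by split; exacts [(hbox e).1, le_refl 0]
          linarith
        have := (Finset.sum_eq_zero_iff_of_nonneg
          (fun e _ => by split; exacts [(hbox e).1, le_refl 0])).1 hsum0 e (Finset.mem_univ e)
        simpa [he] using this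
      have : ∀ e : E, (if ρ e = Sum.inr j then (if ρ e = f (ℓ e) then (1:ℝ) else 0) else 0) = 0 := by
        intro e
        by_cases h1 : ρ e = Sum.inr j
        · by_cases h2 : ρ e = f (ℓ e)
          · exfalso
            obtain ⟨e0, he0l, he0pos, he0r⟩ := (hNmem (ℓ e) (f (ℓ e))).1 (hfmem (ℓ e))
            have : ρ e0 = Sum.inr j := by rw [he0r, ← h2, h1]
            exact absurd (hzero e0 this) (ne_of_gt he0pos)
          · rw [if_pos h1, if_neg h2]
        · rw [if_neg h1]
      simp only [this, Finset.sum_const_zero]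
      exact le_refl 0
  · dsimp only
    intro e
    by_cases h : ρ e = f (ℓ e) <;> simp [h]
  · dsimp only
    intro j
    rw [ht' j]
    by_cases h : 0 < t j <;> simp [h]
end
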